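/- arXiv:1408.2786 — 7 statements merged into one kernel-verified Lean document; each statement's English description precedes it below -/
import Mathlib

section
/- Abel's generalization of the binomial theorem: for all real numbers u, v and every natural number n ≥ 1, (u+v)·(u+v+n)^(n-1) = ∑_{k=0}^{n} C(n,k) · u·(u+k)^(k-1) · v·(v+(n-k))^(n-k-1). -/
/-!
With `A_k(x) = x (x + k)^(k-1)` and `A_0 = 1`, the theorem says that the `A_n` are of binomial
type: `A_n(u + v) = ∑ C(n,k) A_k(u) A_{n-k}(v)`. The key step is Abel's identity
`∑ C(n,k) A_k(x) (y + n - k)^(n-k) = (x + y + n)^n`, proved by induction on `n`: thanks to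
`C(n+1,k) (n+1-k) = (n+1) C(n,k)`, both sides have `y`-derivative `n+1` times the previous case
at `y + 1`, and both vanish at `y = -x-n-1`, the left side because there it is `x` times the
`(n+1)`-st forward difference of `t ↦ t^n`. Binomial type then follows by writing
`A_m(v) = (v + m)^m - m (v + m)^(m-1)` and using Abel's identity at `n` and `n - 1`.
-/

open Finset

theorem sum_neg_one_pow_choose_mul_add_pow_eq_zero {R : Type*} [CommRing R] {j n : ℕ}
    (h : j < n) (x : R) :
    ∑ k ∈ range (n + 1), (-1) ^ (n - k) * (n.choose k : R) * (x + k) ^ j = 0 := by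
  have := congr_fun (fwdDiff_iter_pow_eq_zero_of_lt (R := R) h) x
  rw [fwdDiff_iter_eq_sum_shift] at this
  simpa [zsmul_eq_mul] using this

theorem sum_choose_succ_mul_sub_mul {R : Type*} [Semiring R] (n : ℕ) (f : ℕ → R) :
    ∑ k ∈ range (n + 2), ((n + 1).choose k : R) * ((n + 1 - k : ℕ) : R) * f k =
      (n + 1) * ∑ k ∈ range (n + 1), (n.choose k : R) * f k := by
  rw [sum_range_succ, Nat.sub_self, Nat.cast_zero, mul_zero, zero_mul, add_zero, mul_sum]
  refine sum_congr rfl fun k _ => ?_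
  have := congrArg (Nat.cast : ℕ → R) (Nat.choose_mul_succ_eq n k)
  push_cast at this
  rw [← mul_assoc, ← this, Nat.cast_comm]

def abelPoly (x : ℝ) (k : ℕ) : ℝ := if k = 0 then 1 else x * (x + k) ^ (k - 1)

theorem abelPoly_eq_add_pow_sub (x : ℝ) (m : ℕ) :
    abelPoly x m = (x + m) ^ m - m * (x + m) ^ (m - 1) := by
  unfold abelPoly
  split_ifs with hm
  · simp [hm]
  · obtain ⟨m, rfl⟩ := Nat.exists_eq_succ_of_ne_zero hm
    simp only [Nat.succ_sub_one, pow_succ]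
    ring

def abelSum (x y : ℝ) (n : ℕ) : ℝ :=
  ∑ k ∈ range (n + 1), (n.choose k : ℝ) * abelPoly x k * (y + (n - k : ℕ)) ^ (n - k)

theorem sum_choose_mul_abelPoly_mul_sub_mul_pow (x y : ℝ) (n : ℕ) :
    ∑ k ∈ range (n + 2), ((n + 1).choose k : ℝ) * abelPoly x k *
        (((n + 1 - k : ℕ) : ℝ) * (y + (n + 1 - k : ℕ)) ^ (n + 1 - k - 1)) =
      (n + 1) * abelSum x (y + 1) n := by
  calc _ = ∑ k ∈ range (n + 2), ((n + 1).choose k : ℝ) * ((n + 1 - k : ℕ) : ℝ) *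
        (abelPoly x k * (y + 1 + (n - k : ℕ)) ^ (n - k)) := by
        refine sum_congr rfl fun k hk => ?_
        rcases eq_or_ne k (n + 1) with rfl | hkn
        · simp
        have hk : k ≤ n := by rw [mem_range] at hk; omega
        rw [show n + 1 - k = n - k + 1 by omega, Nat.add_sub_cancel]
        push_cast
        ring
    _ = _ := by rw [sum_choose_succ_mul_sub_mul, abelSum]; simp only [mul_assoc]

theorem hasDerivAt_abelSum_succ (x y : ℝ) (n : ℕ) :
    HasDerivAt (fun y => abelSum x y (n + 1)) ((n + 1) * abelSum x (y + 1) n) y := by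
  rw [← sum_choose_mul_abelPoly_mul_sub_mul_pow]
  refine HasDerivAt.fun_sum fun k _ => ?_
  simpa using (((hasDerivAt_id y).add_const _).pow (n + 1 - k)).const_mul
    (((n + 1).choose k : ℝ) * abelPoly x k)

theorem abelSum_neg_sub_eq_zero (x : ℝ) (n : ℕ) :
    abelSum x (-x - (n + 1 : ℕ)) (n + 1) = 0 := by
  have hterm : ∀ k ∈ range (n + 2),
      ((n + 1).choose k : ℝ) * abelPoly x k *
          (-x - (n + 1 : ℕ) + (n + 1 - k : ℕ)) ^ (n + 1 - k) =
        x * ((-1) ^ (n + 1 - k) * ((n + 1).choose k : ℝ) * (x + k) ^ n) := by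
    intro k hk
    have hk : k ≤ n + 1 := mem_range_succ_iff.mp hk
    rw [Nat.cast_sub hk, show -x - ((n + 1 : ℕ) : ℝ) + ((n + 1 : ℕ) - k) = -(x + k) by ring,
      neg_pow]
    unfold abelPoly
    split_ifs with h0
    · subst h0
      simp only [Nat.choose_zero_right, Nat.cast_one, mul_one, tsub_zero, CharP.cast_eq_zero,
        add_zero, one_mul]
      ring
    · rw [show (x + k) ^ n = (x + k) ^ (k - 1) * (x + k) ^ (n + 1 - k) by
        rw [← pow_add]; congr 1; omega]
      ring
  rw [abelSum, sum_congr rfl hterm, ← mul_sum,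
    sum_neg_one_pow_choose_mul_add_pow_eq_zero (Nat.lt_succ_self n), mul_zero]

theorem abelSum_eq (x y : ℝ) (n : ℕ) : abelSum x y n = (x + y + n) ^ n := by
  induction n generalizing y with
  | zero => simp [abelSum, abelPoly]
  | succ n ih =>
    have hderiv : ∀ z,
        HasDerivAt (fun z => abelSum x z (n + 1) - (x + z + (n + 1 : ℕ)) ^ (n + 1)) 0 z := by
      intro z
      have hpow :=
        (((hasDerivAt_id' z).const_add x).add_const ((n + 1 : ℕ) : ℝ)).fun_pow (n + 1)
      refine ((hasDerivAt_abelSum_succ x z n).sub hpow).congr_deriv ?_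
      rw [ih]
      push_cast
      ring
    have hconst := is_const_of_deriv_eq_zero (fun z => (hderiv z).differentiableAt)
      (fun z => (hderiv z).deriv) y (-x - (n + 1 : ℕ))
    rwa [abelSum_neg_sub_eq_zero, show x + (-x - ((n + 1 : ℕ) : ℝ)) + (n + 1 : ℕ) = 0 by ring,
      zero_pow n.succ_ne_zero, sub_zero, sub_eq_zero] at hconst

theorem abelPoly_add (u v : ℝ) (n : ℕ) :
    abelPoly (u + v) n =
      ∑ k ∈ range (n + 1), (n.choose k : ℝ) * abelPoly u k * abelPoly v (n - k) := by
  cases n with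
  | zero => simp [abelPoly]
  | succ n =>
    simp only [abelPoly_eq_add_pow_sub v, mul_sub, sum_sub_distrib]
    rw [sum_choose_mul_abelPoly_mul_sub_mul_pow, ← abelSum, abelSum_eq, abelSum_eq,
      abelPoly_eq_add_pow_sub]
    push_cast
    ring

/-- Abel's generalization of the binomial theorem. -/
theorem abel_binomial (u v : ℝ) (n : ℕ) (hn : 1 ≤ n) :
    (u + v) * (u + v + (n : ℝ)) ^ (n - 1) =
      ∑ k ∈ Finset.range (n + 1), (n.choose k : ℝ) *
        (if k = 0 then 1 else u * (u + (k : ℝ)) ^ (k - 1)) *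
        (if k = n then 1 else v * (v + ((n - k : ℕ) : ℝ)) ^ (n - k - 1)) := by
  have hlhs : (u + v) * (u + v + (n : ℝ)) ^ (n - 1) = abelPoly (u + v) n := by
    rw [abelPoly, if_neg (by omega)]
  rw [hlhs, abelPoly_add]
  refine sum_congr rfl fun k hk => ?_
  have hkn : k = n ↔ n - k = 0 := by rw [mem_range] at hk; omega
  simp only [abelPoly, hkn]
end

section
/- Hook summation formula (Féray–Goulden–Lascoux): let n ≥ 2 and let x_1,…,x_n and y_{i,j} (1 ≤ i ≤ j ≤ n) be elements of a commutative ring. Then the sum over all unordered increasing trees T on {1,…,n} of ∏_{i=2}^{n} x_{f_T(i)}·(∑_{j ∈ h_T(i)} y_{i,j}) equals x_1 · y_{n,n} · ∏_{i=2}^{n-1} ( y_{i,i}·∑_{j=1}^{i} x_j + x_i·∑_{j=i+1}^{n} y_{i,j} ). -/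
open Finset

open scoped Classical in
/-- The hook of vertex `i` in the tree with parent function `p`. -/
noncomputable def hook {N : ℕ} (p : Fin N → Fin N) (i : Fin N) : Finset (Fin N) :=
  Finset.univ.filter fun j => ∃ k : ℕ, p^[k] j = i

lemma mem_hook {N : ℕ} {p : Fin N → Fin N} {i j : Fin N} :
    j ∈ hook p i ↔ ∃ k : ℕ, p^[k] j = i := by
  simp [hook]
/-- Extend a parent function on `Fin (N+1)` to `Fin (N+2)` by attaching the new
last vertex as a child of `q`. -/
def extend {N : ℕ} (p : Fin (N + 1) → Fin (N + 1)) (q : Fin (N + 1)) :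
    Fin (N + 2) → Fin (N + 2) :=
  Fin.lastCases q.castSucc (fun i => (p i).castSucc)

lemma extend_castSucc {N : ℕ} (p : Fin (N + 1) → Fin (N + 1)) (q : Fin (N + 1))
    (i : Fin (N + 1)) : extend p q i.castSucc = (p i).castSucc :=
  Fin.lastCases_castSucc ..

lemma extend_last {N : ℕ} (p : Fin (N + 1) → Fin (N + 1)) (q : Fin (N + 1)) :
    extend p q (Fin.last (N + 1)) = q.castSucc :=
  Fin.lastCases_last ..

lemma extend_iterate {N : ℕ} (p : Fin (N + 1) → Fin (N + 1)) (q : Fin (N + 1))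
    (k : ℕ) (i : Fin (N + 1)) :
    (extend p q)^[k] i.castSucc = (p^[k] i).castSucc := by
  induction k generalizing i with
  | zero => simp
  | succ k ihk =>
      rw [Function.iterate_succ_apply, extend_castSucc, ihk,
        Function.iterate_succ_apply]

lemma hook_extend_last {N : ℕ} (p : Fin (N + 1) → Fin (N + 1)) (q : Fin (N + 1)) :
    hook (extend p q) (Fin.last (N + 1)) = {Fin.last (N + 1)} := by
  ext j
  simp only [mem_hook, mem_singleton]
  constructor
  · rintro ⟨k, hk⟩
    induction j using Fin.lastCases with
    | last => rfl
    | cast j' =>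
        rw [extend_iterate] at hk
        exact absurd hk (Fin.castSucc_lt_last _).ne
  · rintro rfl
    exact ⟨0, rfl⟩

lemma hook_extend_castSucc {N : ℕ} (p : Fin (N + 1) → Fin (N + 1)) (q : Fin (N + 1))
    (i : Fin (N + 1)) :
    hook (extend p q) i.castSucc =
      if q ∈ hook p i then
        insert (Fin.last (N + 1)) ((hook p i).image Fin.castSucc)
      else (hook p i).image Fin.castSucc := by
  ext j
  induction j using Fin.lastCases with
  | last =>
      simp only [mem_hook]
      have hlast : (∃ k, (extend p q)^[k] (Fin.last (N+1)) = i.castSucc) ↔ q ∈ hook p i := by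
        constructor
        · rintro ⟨k, hk⟩
          match k with
          | 0 => exact absurd hk.symm (Fin.castSucc_lt_last _).ne
          | (s+1) =>
              rw [Function.iterate_succ_apply, extend_last, extend_iterate] at hk
              exact mem_hook.mpr ⟨s, Fin.castSucc_injective _ hk⟩
        · intro hq
          obtain ⟨s, hs⟩ := mem_hook.mp hq
          exact ⟨s + 1, by rw [Function.iterate_succ_apply, extend_last,
            extend_iterate, hs]⟩
      rw [hlast]
      by_cases hq : q ∈ hook p i
      · simp [hq]
      · rw [if_neg hq]
        refine iff_of_false hq fun hmem => ?_
        obtain ⟨a, _, ha⟩ := mem_image.mp hmem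
        exact absurd ha (Fin.castSucc_lt_last _).ne
  | cast j' =>
      simp only [mem_hook]
      have h1 : (∃ k, (extend p q)^[k] j'.castSucc = i.castSucc) ↔ j' ∈ hook p i := by
        simp only [extend_iterate, Fin.castSucc_inj]
        exact mem_hook.symm
      rw [h1]
      have h2 : j'.castSucc ∈ (hook p i).image Fin.castSucc ↔ j' ∈ hook p i := by
        rw [mem_image]
        constructor
        · rintro ⟨a, ha, haa⟩
          rwa [Fin.castSucc_injective _ haa] at ha
        · exact fun h => ⟨j', h, rfl⟩
      by_cases hq : q ∈ hook p i
      · simp only [hq, if_pos, mem_insert, h2]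
        constructor
        · exact Or.inr
        · rintro (h | h)
          · exact absurd h (Fin.castSucc_lt_last _).ne
          · exact h
      · simp [hq, h2]

lemma sum_hook_extend {R : Type*} [AddCommMonoid R] {N : ℕ}
    (p : Fin (N + 1) → Fin (N + 1)) (q : Fin (N + 1)) (i : Fin (N + 1))
    (f : Fin (N + 2) → R) :
    ∑ j ∈ hook (extend p q) i.castSucc, f j =
      (∑ j ∈ hook p i, f j.castSucc) +
        (if q ∈ hook p i then f (Fin.last (N + 1)) else 0) := by
  rw [hook_extend_castSucc]
  have himg : ∑ j ∈ (hook p i).image Fin.castSucc, f j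
      = ∑ j ∈ hook p i, f j.castSucc :=
    sum_image (fun a _ b _ h => Fin.castSucc_injective _ h)
  by_cases hq : q ∈ hook p i
  · rw [if_pos hq, if_pos hq, sum_insert, himg, add_comm]
    intro hmem
    obtain ⟨a, _, ha⟩ := mem_image.mp hmem
    exact absurd ha (Fin.castSucc_lt_last _).ne
  · rw [if_neg hq, if_neg hq, himg, add_zero]
noncomputable def restrictFun {N : ℕ} (p' : Fin (N + 2) → Fin (N + 2)) :
    Fin (N + 1) → Fin (N + 1) :=
  fun i => if h : p' i.castSucc = Fin.last (N + 1) then 0 else (p' i.castSucc).castPred h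

noncomputable def qofFun {N : ℕ} (p' : Fin (N + 2) → Fin (N + 2)) : Fin (N + 1) :=
  if h : p' (Fin.last (N + 1)) = Fin.last (N + 1) then 0
  else (p' (Fin.last (N + 1))).castPred h

open scoped Classical in
lemma sum_trees {R : Type*} [AddCommMonoid R] {N : ℕ}
    (F : (Fin (N + 2) → Fin (N + 2)) → R) :
    ∑ p' ∈ (Finset.univ.filter fun p' : Fin (N + 2) → Fin (N + 2) =>
        p' 0 = 0 ∧ ∀ i, i ≠ 0 → p' i < i), F p'
    = ∑ q : Fin (N + 1),
        ∑ p ∈ (Finset.univ.filter fun p : Fin (N + 1) → Fin (N + 1) =>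
          p 0 = 0 ∧ ∀ i, i ≠ 0 → p i < i), F (extend p q) := by
  have key : ∀ p' ∈ (Finset.univ.filter fun p' : Fin (N + 2) → Fin (N + 2) =>
        p' 0 = 0 ∧ ∀ i, i ≠ 0 → p' i < i),
      ∀ i : Fin (N + 1), p' i.castSucc ≠ Fin.last (N + 1) := by
    intro p' hp' i
    rw [mem_filter] at hp'
    obtain ⟨-, h0, hlt⟩ := hp'
    by_cases hi : i.castSucc = (0 : Fin (N + 2))
    · rw [hi, h0]
      intro h
      have := congrArg Fin.val h
      simp at this
    · have := hlt i.castSucc hi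
      intro h
      rw [h, Fin.lt_def] at this
      simp at this
      omega
  have hleft : ∀ p' ∈ (Finset.univ.filter fun p' : Fin (N + 2) → Fin (N + 2) =>
        p' 0 = 0 ∧ ∀ i, i ≠ 0 → p' i < i),
      extend (restrictFun p') (qofFun p') = p' := by
    intro p' hp'
    have keyi := key p' hp'
    rw [mem_filter] at hp'
    obtain ⟨-, h0, hlt⟩ := hp'
    have keyl : p' (Fin.last (N + 1)) ≠ Fin.last (N + 1) := by
      have hne : (Fin.last (N + 1) : Fin (N + 2)) ≠ 0 := by
        intro h
        have := congrArg Fin.val h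
        simp at this
      exact (hlt _ hne).ne
    funext i
    induction i using Fin.lastCases with
    | last =>
        rw [extend_last, qofFun, dif_neg keyl, Fin.castSucc_castPred]
    | cast i' =>
        rw [extend_castSucc]
        show Fin.castSucc (if h : _ then 0 else _) = _
        rw [dif_neg (keyi i'), Fin.castSucc_castPred]
  rw [← Finset.sum_product']
  refine Finset.sum_nbij' (fun p' => (qofFun p', restrictFun p'))
    (fun pq => extend pq.2 pq.1) ?_ ?_ ?_ ?_ ?_
  · -- maps into the product set
    intro p' hp'
    have keyi := key p' hp'
    rw [mem_filter] at hp'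
    obtain ⟨-, h0, hlt⟩ := hp'
    rw [mem_product, mem_filter]
    refine ⟨mem_univ _, mem_univ _, ?_, ?_⟩
    · have h00 : p' ((0 : Fin (N + 1)).castSucc) = 0 := by
        rw [Fin.castSucc_zero]; exact h0
      show restrictFun p' 0 = 0
      simp only [restrictFun]
      rw [dif_neg (keyi 0)]
      ext
      simp [h00, h0]
    · intro i hi
      have hics : i.castSucc ≠ (0 : Fin (N + 2)) := by
        intro h
        apply hi
        ext
        have := congrArg Fin.val h
        simpa using this
      have hlt2 := hlt i.castSucc hics
      show restrictFun p' i < i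
      simp only [restrictFun]
      rw [dif_neg (keyi i)]
      rw [Fin.lt_def] at hlt2 ⊢
      simpa using hlt2
  · -- extend maps back into the tree set
    rintro ⟨q, p⟩ hpq
    rw [mem_product, mem_filter] at hpq
    obtain ⟨-, -, h0, hlt⟩ := hpq
    replace h0 : p 0 = 0 := h0
    replace hlt : ∀ i, i ≠ 0 → p i < i := hlt
    rw [mem_filter]
    refine ⟨mem_univ _, ?_, ?_⟩
    · have hz : ((0 : Fin (N + 1)).castSucc) = (0 : Fin (N + 2)) := by
        ext; simp
      show extend p q 0 = 0
      rw [← hz, extend_castSucc]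
      show Fin.castSucc (p 0) = _
      rw [h0, hz]
    · intro i hi
      show extend p q i < i
      induction i using Fin.lastCases with
      | last =>
          rw [extend_last]
          exact Fin.castSucc_lt_last q
      | cast i' =>
          rw [extend_castSucc]
          have hi' : i' ≠ 0 := by
            intro h
            apply hi
            rw [h]
            ext; simp
          have := hlt i' hi'
          rw [Fin.lt_def] at this ⊢
          simpa using this
  · -- left inverse
    intro p' hp'
    exact hleft p' hp'
  · -- right inverse
    rintro ⟨q, p⟩ hpq
    have hql : q.castSucc ≠ Fin.last (N + 1) := (Fin.castSucc_lt_last q).ne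
    have hpl : ∀ i : Fin (N + 1), (p i).castSucc ≠ Fin.last (N + 1) :=
      fun i => (Fin.castSucc_lt_last (p i)).ne
    show (qofFun (extend p q), restrictFun (extend p q)) = (q, p)
    refine Prod.ext ?_ ?_
    · show qofFun (extend p q) = q
      rw [qofFun]
      have h1 : extend p q (Fin.last (N + 1)) = q.castSucc := extend_last p q
      rw [dif_neg (by rw [h1]; exact hql)]
      simp_rw [h1]
      exact Fin.castPred_castSucc _
    · show restrictFun (extend p q) = p
      funext i
      simp only [restrictFun]
      have h1 : extend p q i.castSucc = (p i).castSucc := extend_castSucc p q i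
      rw [dif_neg (by rw [h1]; exact hpl i)]
      simp_rw [h1]
      exact Fin.castPred_castSucc _
  · -- values agree
    intro p' hp'
    exact (congrArg F (hleft p' hp')).symm
lemma tele_partial {R : Type*} [CommRing R] (K : ℕ) (x w A : ℕ → R) :
    ∀ q, q < K →
      ∑ r ∈ range (q+1), x r * ∏ i ∈ Ico 1 K,
          (if i < r then A i + x i * w i
           else if i = r then A i + w i * (∑ j ∈ range (i+1), x j) else A i)
      = (∑ j ∈ range (q+1), x j) *
          ∏ i ∈ Ico 1 K, (if i ≤ q then A i + x i * w i else A i) := by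
  intro q
  induction q with
  | zero =>
      intro _
      simp only [zero_add, range_one, sum_singleton]
      congr 1
      apply prod_congr rfl
      intro i hi
      simp only [mem_Ico] at hi
      have h1 : ¬ (i < 0) := by omega
      have h2 : ¬ (i = 0) := by omega
      have h3 : ¬ (i ≤ 0) := by omega
      simp [h1, h2, h3]
  | succ q ih =>
      intro hq
      have hqK : q < K := by omega
      have hmem : q + 1 ∈ Ico 1 K := by simp; omega
      rw [sum_range_succ, ih hqK]
      rw [← mul_prod_erase _ _ hmem, ← mul_prod_erase _ _ hmem,
          ← mul_prod_erase _ _ hmem]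
      have e1 : ∀ i ∈ (Ico 1 K).erase (q+1),
          (if i < q+1 then A i + x i * w i
           else if i = q+1 then A i + w i * (∑ j ∈ range (i+1), x j) else A i)
          = (if i ≤ q then A i + x i * w i else A i) := by
        intro i hi
        have hne : i ≠ q + 1 := (mem_erase.mp hi).1
        by_cases h : i ≤ q
        · have : i < q + 1 := by omega
          simp [h, this]
        · have h1 : ¬ (i < q + 1) := by omega
          simp [h, h1, hne]
      have e2 : ∀ i ∈ (Ico 1 K).erase (q+1),
          (if i ≤ q + 1 then A i + x i * w i else A i)
          = (if i ≤ q then A i + x i * w i else A i) := by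
        intro i hi
        have hne : i ≠ q + 1 := (mem_erase.mp hi).1
        by_cases h : i ≤ q
        · have : i ≤ q + 1 := by omega
          simp [h, this]
        · have h1 : ¬ (i ≤ q + 1) := by omega
          simp [h, h1]
      rw [prod_congr rfl e1, prod_congr rfl e2]
      have c1 : (if q+1 < q+1 then A (q+1) + x (q+1) * w (q+1)
           else if q+1 = q+1 then A (q+1) + w (q+1) * (∑ j ∈ range (q+1+1), x j)
           else A (q+1)) = A (q+1) + w (q+1) * (∑ j ∈ range (q+2), x j) := by simp
      have c2 : (if q+1 ≤ q then A (q+1) + x (q+1) * w (q+1) else A (q+1)) = A (q+1) := by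
        simp
      have c3 : (if q+1 ≤ q+1 then A (q+1) + x (q+1) * w (q+1) else A (q+1))
          = A (q+1) + x (q+1) * w (q+1) := by simp
      rw [c1, c2, c3, sum_range_succ (n := q+1)]
      ring

lemma tele {R : Type*} [CommRing R] (K : ℕ) (hK : 1 ≤ K) (x w A : ℕ → R) (c d : R) :
    ∑ q ∈ range (K+1), x q * (c + if q = K then d else 0) *
        ∏ i ∈ Ico 1 K,
          (if i < q then A i + x i * w i
           else if i = q then A i + w i * (∑ j ∈ range (i+1), x j) else A i)
    = (c * (∑ j ∈ range (K+1), x j) + x K * d) *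
        ∏ i ∈ Ico 1 K, (A i + x i * w i) := by
  rw [sum_range_succ]
  have e1 : ∀ q ∈ range K,
      x q * (c + if q = K then d else 0) *
        ∏ i ∈ Ico 1 K,
          (if i < q then A i + x i * w i
           else if i = q then A i + w i * (∑ j ∈ range (i+1), x j) else A i)
      = c * (x q *
        ∏ i ∈ Ico 1 K,
          (if i < q then A i + x i * w i
           else if i = q then A i + w i * (∑ j ∈ range (i+1), x j) else A i)) := by
    intro q hq
    have : q ≠ K := by simp at hq; omega
    simp [this]; ring
  rw [sum_congr rfl e1, ← mul_sum]
  obtain ⟨K', rfl⟩ : ∃ K', K = K' + 1 := ⟨K - 1, by omega⟩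
  rw [tele_partial (K'+1) x w A K' (by omega)]
  have e2 : ∀ i ∈ Ico 1 (K'+1), (if i ≤ K' then A i + x i * w i else A i)
      = A i + x i * w i := by
    intro i hi
    simp only [mem_Ico] at hi
    have : i ≤ K' := by omega
    simp [this]
  have e3 : ∀ i ∈ Ico 1 (K'+1),
      (if i < K'+1 then A i + x i * w i
           else if i = K'+1 then A i + w i * (∑ j ∈ range (i+1), x j) else A i)
      = A i + x i * w i := by
    intro i hi
    simp only [mem_Ico] at hi
    simp [hi.2]
  rw [prod_congr rfl e2, prod_congr rfl e3, sum_range_succ (n := K'+1)]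
  simp only [eq_self_iff_true, if_true]
  ring
-- castSucc set lemmas
lemma Iic_castSucc' {N : ℕ} (i : Fin (N + 1)) :
    Finset.Iic i.castSucc = (Finset.Iic i).image Fin.castSucc := by
  ext j
  simp only [mem_Iic, mem_image]
  constructor
  · intro hj
    have hjv : j.val ≤ i.val := hj
    have hjlt : j.val < N + 1 := lt_of_le_of_lt hjv i.isLt
    refine ⟨⟨j.val, hjlt⟩, hjv, ?_⟩
    ext; simp
  · rintro ⟨a, ha, rfl⟩
    exact Fin.castSucc_le_castSucc_iff.mpr ha

lemma Ioi_castSucc' {N : ℕ} (i : Fin (N + 1)) :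
    Finset.Ioi i.castSucc =
      insert (Fin.last (N + 1)) ((Finset.Ioi i).image Fin.castSucc) := by
  ext j
  simp only [mem_Ioi, mem_insert, mem_image]
  constructor
  · intro hj
    induction j using Fin.lastCases with
    | last => exact Or.inl rfl
    | cast j' =>
        exact Or.inr ⟨j', Fin.castSucc_lt_castSucc_iff.mp hj, rfl⟩
  · rintro (rfl | ⟨a, ha, rfl⟩)
    · exact Fin.castSucc_lt_last i
    · exact Fin.castSucc_lt_castSucc_iff.mpr ha

lemma erase0_univ_succ {N : ℕ} :
    (Finset.univ.erase (0 : Fin (N + 2))) =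
      insert (Fin.last (N + 1))
        ((Finset.univ.erase (0 : Fin (N + 1))).image Fin.castSucc) := by
  ext j
  simp only [mem_erase, mem_univ, and_true, mem_insert, mem_image]
  constructor
  · intro hj
    induction j using Fin.lastCases with
    | last => exact Or.inl rfl
    | cast j' =>
        refine Or.inr ⟨j', ?_, rfl⟩
        intro h
        apply hj
        rw [h, Fin.castSucc_zero]
  · rintro (rfl | ⟨a, ha, rfl⟩)
    · intro h
      have := congrArg Fin.val h
      simp at this
    · intro h
      apply ha
      rw [← Fin.castSucc_zero] at h
      exact Fin.castSucc_injective _ h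

lemma erase0_erase_last {N : ℕ} :
    ((Finset.univ.erase (0 : Fin (N + 2))).erase (Fin.last (N + 1))) =
      (Finset.univ.erase (0 : Fin (N + 1))).image Fin.castSucc := by
  rw [erase0_univ_succ, erase_insert]
  intro hmem
  obtain ⟨a, -, ha⟩ := mem_image.mp hmem
  exact absurd ha (Fin.castSucc_lt_last _).ne

-- val-image lemmas
open Fin.NatCast in
lemma sum_via_val {R : Type*} [AddCommMonoid R] {M : ℕ} [NeZero M]
    (g : Fin M → R) (s : Finset (Fin M)) :
    ∑ i ∈ s, g i = ∑ k ∈ s.image Fin.val, g (k : Fin M) := by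
  rw [Finset.sum_image (fun a _ b _ h => Fin.val_injective h)]
  exact Finset.sum_congr rfl fun i _ => by rw [Fin.cast_val_eq_self]

open Fin.NatCast in
lemma prod_via_val {R : Type*} [CommMonoid R] {M : ℕ} [NeZero M]
    (g : Fin M → R) (s : Finset (Fin M)) :
    ∏ i ∈ s, g i = ∏ k ∈ s.image Fin.val, g (k : Fin M) := by
  rw [Finset.prod_image (fun a _ b _ h => Fin.val_injective h)]
  exact Finset.prod_congr rfl fun i _ => by rw [Fin.cast_val_eq_self]

lemma image_val_univ {M : ℕ} : (Finset.univ : Finset (Fin M)).image Fin.val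
    = Finset.range M := by
  ext k
  simp only [mem_image, mem_univ, true_and, mem_range]
  constructor
  · rintro ⟨a, -, rfl⟩; exact a.isLt
  · intro hk; exact ⟨⟨k, hk⟩, rfl⟩

lemma image_val_Iic {M : ℕ} (i : Fin M) :
    (Finset.Iic i).image Fin.val = Finset.range (i.val + 1) := by
  ext k
  simp only [mem_image, mem_Iic, mem_range]
  constructor
  · rintro ⟨a, ha, rfl⟩; exact Nat.lt_succ_of_le ha
  · intro hk
    exact ⟨⟨k, lt_of_lt_of_le hk i.isLt⟩, Nat.lt_succ_iff.mp hk, rfl⟩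

lemma image_val_mid {M : ℕ} :
    ((Finset.univ.erase (0 : Fin (M + 2))).erase (Fin.last (M + 1))).image Fin.val
      = Finset.Ico 1 (M + 1) := by
  ext k
  simp only [mem_image, mem_erase, mem_univ, and_true, mem_Ico]
  constructor
  · rintro ⟨a, ⟨hal, ha0⟩, rfl⟩
    constructor
    · rcases Nat.eq_zero_or_pos a.val with h | h
      · exact absurd (Fin.ext h) ha0
      · exact h
    · rcases lt_or_eq_of_le (Nat.lt_succ_iff.mp a.isLt) with h | h
      · exact h
      · exact absurd (Fin.ext (by simpa using h)) hal
  · intro hk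
    refine ⟨⟨k, by omega⟩, ⟨?_, ?_⟩, rfl⟩
    · intro h
      have := congrArg Fin.val h
      simp at this
      omega
    · intro h
      have := congrArg Fin.val h
      simp at this
      omega

open Fin.NatCast in
lemma tele_fin {R : Type*} [CommRing R] (m : ℕ) (xc w A : Fin (m + 2) → R) (c d : R) :
    ∑ q : Fin (m + 2), xc q * (c + if q = Fin.last (m + 1) then d else 0) *
      ∏ i ∈ (Finset.univ.erase (0 : Fin (m + 2))).erase (Fin.last (m + 1)),
        (A i + (if i = q then w i * ∑ j ∈ Finset.Iic i, xc j else 0)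
             + (if i < q then xc i * w i else 0))
    = (c * ∑ q : Fin (m + 2), xc q + xc (Fin.last (m + 1)) * d) *
      ∏ i ∈ (Finset.univ.erase (0 : Fin (m + 2))).erase (Fin.last (m + 1)),
        (A i + xc i * w i) := by
  have hIic : ∀ ν : Fin (m + 2), ∑ j ∈ Finset.Iic ν, xc j
      = ∑ l ∈ range (ν.val + 1), xc (l : Fin (m + 2)) := by
    intro ν
    rw [sum_via_val xc (Finset.Iic ν), image_val_Iic]
  have hL : ∑ q : Fin (m + 2), xc q * (c + if q = Fin.last (m + 1) then d else 0) *
      ∏ i ∈ (Finset.univ.erase (0 : Fin (m + 2))).erase (Fin.last (m + 1)),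
        (A i + (if i = q then w i * ∑ j ∈ Finset.Iic i, xc j else 0)
             + (if i < q then xc i * w i else 0))
      = ∑ k ∈ range (m + 2), xc (k : Fin (m + 2)) *
          (c + if k = m + 1 then d else 0) *
          ∏ j ∈ Ico 1 (m + 1),
            (if j < k then A (j : Fin (m + 2)) + xc (j : Fin (m + 2)) * w (j : Fin (m + 2))
             else if j = k then A (j : Fin (m + 2)) + w (j : Fin (m + 2)) *
                (∑ l ∈ range (j + 1), xc (l : Fin (m + 2)))
             else A (j : Fin (m + 2))) := by
    rw [sum_via_val (fun q => xc q * (c + if q = Fin.last (m + 1) then d else 0) *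
      ∏ i ∈ (Finset.univ.erase (0 : Fin (m + 2))).erase (Fin.last (m + 1)),
        (A i + (if i = q then w i * ∑ j ∈ Finset.Iic i, xc j else 0)
             + (if i < q then xc i * w i else 0))) Finset.univ, image_val_univ]
    refine Finset.sum_congr rfl fun k hk => ?_
    rw [mem_range] at hk
    have hkval : ((k : Fin (m + 2)) : ℕ) = k := Fin.val_cast_of_lt hk
    have hcond : ((k : Fin (m + 2)) = Fin.last (m + 1)) ↔ k = m + 1 := by
      rw [Fin.ext_iff, hkval, Fin.val_last]
    congr 1
    · congr 2
      by_cases h : k = m + 1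
      · rw [if_pos (hcond.mpr h), if_pos h]
      · rw [if_neg (fun h' => h (hcond.mp h')), if_neg h]
    · rw [prod_via_val (fun i => A i + (if i = (k : Fin (m + 2)) then
          w i * ∑ j ∈ Finset.Iic i, xc j else 0)
          + (if i < (k : Fin (m + 2)) then xc i * w i else 0)), image_val_mid]
      refine Finset.prod_congr rfl fun j hj => ?_
      rw [mem_Ico] at hj
      have hjval : ((j : Fin (m + 2)) : ℕ) = j := Fin.val_cast_of_lt (by omega)
      have hlt : ((j : Fin (m + 2)) < (k : Fin (m + 2))) ↔ j < k := by
        rw [Fin.lt_def, hjval, hkval]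
      have heq : ((j : Fin (m + 2)) = (k : Fin (m + 2))) ↔ j = k := by
        rw [Fin.ext_iff, hjval, hkval]
      rw [hIic (j : Fin (m + 2)), hjval]
      rcases lt_trichotomy j k with h | h | h
      · rw [if_neg (by rw [heq]; omega), if_pos (hlt.mpr h), if_pos h]
        ring
      · rw [if_pos (heq.mpr h), if_neg (by rw [hlt]; omega),
          if_neg (by omega : ¬ j < k), if_pos h]
        ring
      · rw [if_neg (by rw [heq]; omega), if_neg (by rw [hlt]; omega),
          if_neg (by omega : ¬ j < k), if_neg (by omega : ¬ j = k)]
        ring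
  have hR1 : ∑ q : Fin (m + 2), xc q = ∑ k ∈ range (m + 2), xc (k : Fin (m + 2)) := by
    rw [sum_via_val xc Finset.univ, image_val_univ]
  have hR2 : xc (Fin.last (m + 1)) = xc ((m + 1 : ℕ) : Fin (m + 2)) := by
    congr 1
    ext
    rw [Fin.val_last, Fin.val_cast_of_lt (by omega)]
  have hR3 : ∏ i ∈ (Finset.univ.erase (0 : Fin (m + 2))).erase (Fin.last (m + 1)),
        (A i + xc i * w i)
      = ∏ j ∈ Ico 1 (m + 1), (A (j : Fin (m + 2)) +
          xc (j : Fin (m + 2)) * w (j : Fin (m + 2))) := by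
    rw [prod_via_val (fun i => A i + xc i * w i), image_val_mid]
  rw [hL, hR1, hR2, hR3]
  exact tele (m + 1) (by omega) (fun k => xc (k : Fin (m + 2)))
    (fun k => w (k : Fin (m + 2))) (fun k => A (k : Fin (m + 2))) c d

open scoped Classical in
/-- Hook summation formula of Féray–Goulden–Lascoux, for `n ≥ 2` (here `n + 2`).
Vertices `{1, …, n}` are encoded as `Fin n`, the root `1` being `0 : Fin n`,
an increasing tree being its parent function `p` with `p i < i` off the root;
`f_T(i) = p i` and the hook is the vertex set of the subtree rooted at `i`. -/
theorem hook_summation_formula {R : Type*} [CommRing R] (n : ℕ)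
    (x : Fin (n + 2) → R) (y : Fin (n + 2) → Fin (n + 2) → R) :
    ∑ p ∈ (Finset.univ.filter fun p : Fin (n + 2) → Fin (n + 2) =>
        p 0 = 0 ∧ ∀ i, i ≠ 0 → p i < i),
      ∏ i ∈ Finset.univ.erase (0 : Fin (n + 2)),
        (x (p i) * ∑ j ∈ hook p i, y i j)
    = x 0 * y (Fin.last (n + 1)) (Fin.last (n + 1)) *
        ∏ i ∈ (Finset.univ.erase (0 : Fin (n + 2))).erase (Fin.last (n + 1)),
          (y i i * ∑ j ∈ Finset.Iic i, x j + x i * ∑ j ∈ Finset.Ioi i, y i j) := by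
  induction n with
  | zero =>
      have hset : (Finset.univ.filter fun p : Fin 2 → Fin 2 =>
          p 0 = 0 ∧ ∀ i, i ≠ 0 → p i < i) = {fun _ => (0 : Fin 2)} := by
        ext p
        rw [mem_filter, mem_singleton]
        constructor
        · rintro ⟨-, h0, hlt⟩
          funext i
          fin_cases i
          · exact h0
          · have := hlt 1 (by decide)
            rw [Fin.lt_def] at this
            ext
            simp at this
            simp [this]
        · rintro rfl
          exact ⟨mem_univ _, rfl, fun i hi => by
            rw [Fin.lt_def]
            simp only [Fin.val_zero]
            exact Nat.pos_of_ne_zero fun h => hi (Fin.ext h)⟩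
      have hhook : hook (fun _ => (0 : Fin 2)) 1 = {1} := by
        ext j
        rw [mem_hook, mem_singleton]
        constructor
        · rintro ⟨k, hk⟩
          match k with
          | 0 => exact hk
          | (s + 1) =>
              rw [Function.iterate_succ_apply'] at hk
              exact absurd hk (by decide)
        · rintro rfl
          exact ⟨0, rfl⟩
      have hset1 : Finset.univ.erase (0 : Fin 2) = {1} := by decide
      rw [hset, sum_singleton, hset1, prod_singleton, hhook, sum_singleton]
      have hset2 : ({1} : Finset (Fin 2)).erase (Fin.last (0 + 1)) = ∅ := by decide
      rw [hset2, prod_empty]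
      have h4 : Fin.last (0 + 1) = (1 : Fin 2) := rfl
      rw [h4]
      ring
  | succ m ih =>
      rw [sum_trees]
      -- Step 1: rewrite each summand using the hook structure of the extended tree
      have key1 : ∀ (q : Fin (m + 2)) (p : Fin (m + 2) → Fin (m + 2)),
          (∏ i ∈ Finset.univ.erase (0 : Fin (m + 1 + 2)),
            (x (extend p q i) * ∑ j ∈ hook (extend p q) i, y i j))
          = (x q.castSucc * y (Fin.last (m + 1 + 1)) (Fin.last (m + 1 + 1))) *
            ∏ i ∈ Finset.univ.erase (0 : Fin (m + 2)),
              (x (p i).castSucc * ∑ j ∈ hook p i,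
                (y i.castSucc j.castSucc +
                  if j = q then y i.castSucc (Fin.last (m + 1 + 1)) else 0)) := by
        intro q p
        rw [erase0_univ_succ (N := m + 1)]
        rw [prod_insert (by
          intro hmem
          obtain ⟨a, -, ha⟩ := mem_image.mp hmem
          exact absurd ha (Fin.castSucc_lt_last _).ne)]
        rw [prod_image (fun a _ b _ h => Fin.castSucc_injective _ h)]
        rw [extend_last, hook_extend_last, sum_singleton]
        congr 1
        refine prod_congr rfl fun i _ => ?_
        rw [extend_castSucc, sum_hook_extend, Finset.sum_add_distrib,
          Finset.sum_ite_eq' (hook p i) q]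
      -- Step 2: apply the induction hypothesis for each choice of `q`
      have key2 : ∀ q : Fin (m + 2),
          (∑ p ∈ (Finset.univ.filter fun p : Fin (m + 2) → Fin (m + 2) =>
              p 0 = 0 ∧ ∀ i, i ≠ 0 → p i < i),
            ∏ i ∈ Finset.univ.erase (0 : Fin (m + 1 + 2)),
              (x (extend p q i) * ∑ j ∈ hook (extend p q) i, y i j))
          = x q.castSucc * y (Fin.last (m + 1 + 1)) (Fin.last (m + 1 + 1)) *
            (x 0 *
              (y (Fin.last (m + 1)).castSucc (Fin.last (m + 1)).castSucc +
                if q = Fin.last (m + 1) then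
                  y (Fin.last (m + 1)).castSucc (Fin.last (m + 1 + 1)) else 0) *
              ∏ i ∈ (Finset.univ.erase (0 : Fin (m + 2))).erase (Fin.last (m + 1)),
                ((y i.castSucc i.castSucc * ∑ j ∈ Finset.Iic i, x j.castSucc +
                    x i.castSucc * ∑ j ∈ Finset.Ioi i, y i.castSucc j.castSucc) +
                  (if i = q then
                    y i.castSucc (Fin.last (m + 1 + 1)) * ∑ j ∈ Finset.Iic i, x j.castSucc
                   else 0) +
                  (if i < q then
                    x i.castSucc * y i.castSucc (Fin.last (m + 1 + 1)) else 0))) := by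
        intro q
        rw [Finset.sum_congr rfl fun p _ => key1 q p, ← Finset.mul_sum]
        congr 1
        have hih := ih (fun i => x i.castSucc)
          (fun i j => y i.castSucc j.castSucc +
            if j = q then y i.castSucc (Fin.last (m + 1 + 1)) else 0)
        rw [hih]
        congr 1
        · -- the `x 0 * (y' K K)` part
          rw [Fin.castSucc_zero]
          by_cases h : q = Fin.last (m + 1)
          · rw [if_pos h.symm, if_pos h]
          · rw [if_neg fun hh => h hh.symm, if_neg h]
        · -- the product part
          refine prod_congr rfl fun i hi => ?_
          rw [Finset.sum_add_distrib, Finset.sum_ite_eq' (Finset.Ioi i) q]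
          simp only [Finset.mem_Ioi]
          split_ifs <;> ring
      rw [Finset.sum_congr rfl fun q _ => key2 q]
      have hinj : ∀ (a : Fin (m + 2)) (_ : a ∈ (Finset.univ.erase (0 : Fin (m+2))).erase (Fin.last (m+1)))
          (b : Fin (m + 2)) (_ : b ∈ (Finset.univ.erase (0 : Fin (m+2))).erase (Fin.last (m+1))),
          a.castSucc = b.castSucc → a = b := fun a _ b _ h => Fin.castSucc_injective _ h
      have hIoiK : Finset.Ioi (Fin.last (m + 1)) = (∅ : Finset (Fin (m + 2))) := by
        ext j
        simp only [Finset.mem_Ioi, Finset.notMem_empty, iff_false]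
        exact fun h => absurd (Fin.le_last j) (not_le.mpr h)
      have hIicK : Finset.Iic (Fin.last (m + 1)) = (Finset.univ : Finset (Fin (m + 2))) := by
        ext j
        simp [Fin.le_last]
      have hnotmem : ∀ s : Finset (Fin (m + 2)),
          Fin.last (m + 1 + 1) ∉ s.image Fin.castSucc := by
        intro s hmem
        obtain ⟨a, -, ha⟩ := mem_image.mp hmem
        exact absurd ha (Fin.castSucc_lt_last _).ne
      have himg : ∀ (s : Finset (Fin (m + 2))) (g : Fin (m + 1 + 2) → R),
          ∑ j ∈ s.image Fin.castSucc, g j = ∑ j ∈ s, g j.castSucc :=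
        fun s g => Finset.sum_image (fun a _ b _ h => Fin.castSucc_injective _ h)
      have hmid : (∏ i ∈ (Finset.univ.erase (0 : Fin (m + 1 + 2))).erase (Fin.last (m + 1 + 1)),
            (y i i * ∑ j ∈ Finset.Iic i, x j + x i * ∑ j ∈ Finset.Ioi i, y i j))
          = (y (Fin.last (m + 1)).castSucc (Fin.last (m + 1)).castSucc *
                (∑ q : Fin (m + 2), x q.castSucc) +
              x (Fin.last (m + 1)).castSucc *
                y (Fin.last (m + 1)).castSucc (Fin.last (m + 1 + 1))) *
            ∏ i ∈ (Finset.univ.erase (0 : Fin (m + 2))).erase (Fin.last (m + 1)),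
              ((y i.castSucc i.castSucc * ∑ j ∈ Finset.Iic i, x j.castSucc +
                  x i.castSucc * ∑ j ∈ Finset.Ioi i, y i.castSucc j.castSucc) +
                x i.castSucc * y i.castSucc (Fin.last (m + 1 + 1))) := by
        rw [erase0_erase_last (N := m + 1),
          Finset.prod_image (fun a _ b _ h => Fin.castSucc_injective _ h),
          ← Finset.mul_prod_erase (Finset.univ.erase (0 : Fin (m + 2)))
            _ (a := Fin.last (m + 1)) (by
              rw [mem_erase]
              refine ⟨?_, mem_univ _⟩
              intro h
              have := congrArg Fin.val h
              simp at this)]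
        congr 1
        · rw [Iic_castSucc', himg, Ioi_castSucc', Finset.sum_insert (hnotmem _), himg,
            hIicK, hIoiK]
          simp only [Finset.sum_empty, add_zero]
        · refine prod_congr rfl fun i hi => ?_
          rw [Iic_castSucc', himg, Ioi_castSucc', Finset.sum_insert (hnotmem _), himg]
          ring
      trans (x 0 * y (Fin.last (m + 1 + 1)) (Fin.last (m + 1 + 1)) *
        ∑ q : Fin (m + 2), x q.castSucc *
          (y (Fin.last (m + 1)).castSucc (Fin.last (m + 1)).castSucc +
            if q = Fin.last (m + 1) then
              y (Fin.last (m + 1)).castSucc (Fin.last (m + 1 + 1)) else 0) *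
          ∏ i ∈ (Finset.univ.erase (0 : Fin (m + 2))).erase (Fin.last (m + 1)),
            ((y i.castSucc i.castSucc * ∑ j ∈ Finset.Iic i, x j.castSucc +
                    x i.castSucc * ∑ j ∈ Finset.Ioi i, y i.castSucc j.castSucc) +
                  (if i = q then
                    y i.castSucc (Fin.last (m + 1 + 1)) * ∑ j ∈ Finset.Iic i, x j.castSucc
                   else 0) +
                  (if i < q then
                    x i.castSucc * y i.castSucc (Fin.last (m + 1 + 1)) else 0)))
      · rw [Finset.mul_sum]
        exact Finset.sum_congr rfl fun q _ => by ring
      · rw [show (∑ q : Fin (m + 2), x q.castSucc *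
            (y (Fin.last (m + 1)).castSucc (Fin.last (m + 1)).castSucc +
              if q = Fin.last (m + 1) then
                y (Fin.last (m + 1)).castSucc (Fin.last (m + 1 + 1)) else 0) *
            ∏ i ∈ (Finset.univ.erase (0 : Fin (m + 2))).erase (Fin.last (m + 1)),
              ((y i.castSucc i.castSucc * ∑ j ∈ Finset.Iic i, x j.castSucc +
                    x i.castSucc * ∑ j ∈ Finset.Ioi i, y i.castSucc j.castSucc) +
                  (if i = q then
                    y i.castSucc (Fin.last (m + 1 + 1)) * ∑ j ∈ Finset.Iic i, x j.castSucc
                   else 0) +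
                  (if i < q then
                    x i.castSucc * y i.castSucc (Fin.last (m + 1 + 1)) else 0)))
          = (y (Fin.last (m + 1)).castSucc (Fin.last (m + 1)).castSucc *
                (∑ q : Fin (m + 2), x q.castSucc) +
              x (Fin.last (m + 1)).castSucc *
                y (Fin.last (m + 1)).castSucc (Fin.last (m + 1 + 1))) *
            ∏ i ∈ (Finset.univ.erase (0 : Fin (m + 2))).erase (Fin.last (m + 1)),
              ((y i.castSucc i.castSucc * ∑ j ∈ Finset.Iic i, x j.castSucc +
                  x i.castSucc * ∑ j ∈ Finset.Ioi i, y i.castSucc j.castSucc) +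
                x i.castSucc * y i.castSucc (Fin.last (m + 1 + 1)))
          from tele_fin m (fun i => x i.castSucc)
            (fun i => y i.castSucc (Fin.last (m + 1 + 1)))
            (fun i => y i.castSucc i.castSucc * ∑ j ∈ Finset.Iic i, x j.castSucc +
              x i.castSucc * ∑ j ∈ Finset.Ioi i, y i.castSucc j.castSucc)
            (y (Fin.last (m + 1)).castSucc (Fin.last (m + 1)).castSucc)
            (y (Fin.last (m + 1)).castSucc (Fin.last (m + 1 + 1)))]
        rw [hmid]
end

section
/- Leaf-insertion recursion for the hook-sum generating polynomial: let Θ_n be the polynomial in variables x_i and y_{i,j} (i ≤ j) defined by Θ_n = y_{n,n}·∏_{i=1}^{n-1}( y_{i,i}∑_{j=1}^{i} x_j + x_i ∑_{j=i+1}^{n} y_{i,j} ). For 1 ≤ i ≤ n let ψ^i_{n+1} be the substitution sending y_{k,i} to y_{k,i} + y_{k,n+1} for all 1 ≤ k ≤ i (and fixing all other variables). Then Θ_{n+1} = y_{n+1,n+1} · ∑_{i=1}^{n} x_i · ψ^i_{n+1}(Θ_n). -/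
open MvPolynomial

/-- The closed form `Θ_n = y_{n,n} ∏_{i=1}^{n-1}(y_{i,i} ∑_{j=1}^i x_j + x_i ∑_{j=i+1}^n y_{i,j})`
as a multivariate polynomial over `ℤ`, with `X (.inl i)` playing the role of `x_i` and
`X (.inr (i,j))` that of `y_{i,j}`. -/
noncomputable def Theta (n : ℕ) : MvPolynomial (ℕ ⊕ ℕ × ℕ) ℤ :=
  X (Sum.inr (n, n)) * ∏ i ∈ Finset.Ico 1 n,
    (X (Sum.inr (i, i)) * ∑ j ∈ Finset.Icc 1 i, X (Sum.inl j)
      + X (Sum.inl i) * ∑ j ∈ Finset.Icc (i + 1) n, X (Sum.inr (i, j)))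

/-- The substitution `ψ^i_m` sending `y_{k,i} ↦ y_{k,i} + y_{k,m}` for all `k ≤ i`
and fixing all other variables, described on generators. -/
noncomputable def psi (i m : ℕ) : (ℕ ⊕ ℕ × ℕ) → MvPolynomial (ℕ ⊕ ℕ × ℕ) ℤ :=
  fun v =>
    match v with
    | Sum.inl a => X (Sum.inl a)
    | Sum.inr (k, l) =>
        if l = i ∧ k ≤ i then X (Sum.inr (k, l)) + X (Sum.inr (k, m)) else X (Sum.inr (k, l))

/-! Writing `S_i = x_1 + ⋯ + x_i`, `b_k` for the `k`-th factor of `Θ_n` and `c_k = y_{k,n+1}`,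
the substitution `ψ^i_{n+1}` turns the factors `b_k` with `k < i` into `b_k + x_k c_k` (the
corresponding factors of `Θ_{n+1}`), turns `b_i` into `b_i + c_i S_i` and fixes the factors
with `k > i`. Because `S_i (b_i + x_i c_i) - S_{i-1} b_i = x_i (b_i + c_i S_i)`, the sum
`∑_{i<n} x_i ψ^i_{n+1}(Θ_n)` telescopes to `y_{n,n} S_{n-1} ∏_{k<n} (b_k + x_k c_k)`; adding the
term `i = n`, where only the leading `y_{n,n}` moves, gives the product of the factors of `Θ_{n+1}`. -/

open Finset

theorem sum_mul_prod_Ico_mul_prod_Ioc_eq {R : Type*} [CommSemiring R] {a b c x : ℕ → R} {m : ℕ}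
    (hab : ∀ k ≤ m, a k = b k + x k * c k) :
    ∑ i ∈ Icc 1 m, x i * ((∏ k ∈ Ico 1 i, a k) * (b i + c i * ∑ j ∈ Icc 1 i, x j) *
        ∏ k ∈ Ioc i m, b k) =
      (∑ j ∈ Icc 1 m, x j) * ∏ k ∈ Icc 1 m, a k := by
  induction m with
  | zero => simp
  | succ m ih =>
    have hsum : ∀ f : ℕ → R, ∑ i ∈ Icc 1 (m + 1), f i = ∑ i ∈ Icc 1 m, f i + f (m + 1) :=
      fun f => sum_Icc_succ_top (by omega) f
    have hIoc : ∀ i ∈ Icc 1 m, ∏ k ∈ Ioc i (m + 1), b k = (∏ k ∈ Ioc i m, b k) * b (m + 1) :=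
      fun i hi => prod_Ioc_succ_top (mem_Icc.1 hi).2 b
    rw [hsum, sum_congr rfl fun i hi => by rw [hIoc i hi], Ioc_self, prod_empty,
      Ico_add_one_right_eq_Icc, hsum, prod_Icc_succ_top (by omega), hab (m + 1) le_rfl]
    simp only [← mul_assoc, ← sum_mul] at ih ⊢
    rw [ih fun k hk => hab k (by omega)]
    ring

noncomputable def hookFactor (n k : ℕ) : MvPolynomial (ℕ ⊕ ℕ × ℕ) ℤ :=
  X (Sum.inr (k, k)) * ∑ j ∈ Icc 1 k, X (Sum.inl j)
    + X (Sum.inl k) * ∑ j ∈ Icc (k + 1) n, X (Sum.inr (k, j))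

theorem Theta_eq_mul_prod_hookFactor (n : ℕ) :
    Theta n = X (Sum.inr (n, n)) * ∏ k ∈ Ico 1 n, hookFactor n k := rfl

theorem hookFactor_succ {n k : ℕ} (hk : k ≤ n) :
    hookFactor (n + 1) k = hookFactor n k + X (Sum.inl k) * X (Sum.inr (k, n + 1)) := by
  rw [hookFactor, hookFactor, sum_Icc_succ_top (by omega)]
  ring

theorem hookFactor_self (n : ℕ) :
    hookFactor n n = X (Sum.inr (n, n)) * ∑ j ∈ Icc 1 n, X (Sum.inl j) := by
  simp [hookFactor]

theorem aeval_psi_X_inl (i m a : ℕ) :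
    aeval (psi i m) (X (Sum.inl a) : MvPolynomial (ℕ ⊕ ℕ × ℕ) ℤ) = X (Sum.inl a) :=
  aeval_X _ _

theorem aeval_psi_X_inr (i m k l : ℕ) :
    aeval (psi i m) (X (Sum.inr (k, l)) : MvPolynomial (ℕ ⊕ ℕ × ℕ) ℤ) =
      X (Sum.inr (k, l)) + if l = i ∧ k ≤ i then X (Sum.inr (k, m)) else 0 := by
  rw [aeval_X, psi]
  split_ifs <;> simp

theorem aeval_psi_hookFactor_of_lt {n i k : ℕ} (hk : k < i) (hi : i ≤ n) :
    aeval (psi i (n + 1)) (hookFactor n k) = hookFactor (n + 1) k := by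
  simp only [hookFactor, map_add, map_mul, map_sum, aeval_psi_X_inl, aeval_psi_X_inr,
    sum_add_distrib, hk.ne, hk.le, if_false, add_zero, and_true, sum_ite_eq']
  rw [if_pos (mem_Icc.2 ⟨hk, hi⟩), sum_Icc_succ_top (by omega)]

theorem aeval_psi_hookFactor_self (n i : ℕ) :
    aeval (psi i (n + 1)) (hookFactor n i) =
      hookFactor n i + X (Sum.inr (i, n + 1)) * ∑ j ∈ Icc 1 i, X (Sum.inl j) := by
  simp only [hookFactor, map_add, map_mul, map_sum, aeval_psi_X_inl, aeval_psi_X_inr,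
    sum_add_distrib, le_refl, and_true, if_true, sum_ite_eq']
  rw [if_neg (by simp)]
  ring

theorem aeval_psi_hookFactor_of_gt {n i k : ℕ} (hk : i < k) :
    aeval (psi i (n + 1)) (hookFactor n k) = hookFactor n k := by
  simp only [hookFactor, map_add, map_mul, map_sum, aeval_psi_X_inl, aeval_psi_X_inr,
    hk.not_ge, and_false, if_false, add_zero]

theorem aeval_psi_Theta_of_le {n i : ℕ} (hi₁ : 1 ≤ i) (hi : i ≤ n) :
    aeval (psi i (n + 2)) (Theta (n + 1)) = X (Sum.inr (n + 1, n + 1)) *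
      ((∏ k ∈ Ico 1 i, hookFactor (n + 2) k) *
        (hookFactor (n + 1) i + X (Sum.inr (i, n + 2)) * ∑ j ∈ Icc 1 i, X (Sum.inl j)) *
          ∏ k ∈ Ioc i n, hookFactor (n + 1) k) := by
  have hlt : ∏ k ∈ Ico 1 i, aeval (psi i (n + 2)) (hookFactor (n + 1) k) =
      ∏ k ∈ Ico 1 i, hookFactor (n + 2) k :=
    prod_congr rfl fun k hk => aeval_psi_hookFactor_of_lt (mem_Ico.1 hk).2 (by omega)
  have hgt : ∏ k ∈ Ioc i n, aeval (psi i (n + 2)) (hookFactor (n + 1) k) =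
      ∏ k ∈ Ioc i n, hookFactor (n + 1) k :=
    prod_congr rfl fun k hk => aeval_psi_hookFactor_of_gt (mem_Ioc.1 hk).1
  rw [Theta_eq_mul_prod_hookFactor, map_mul, map_prod, aeval_psi_X_inr, if_neg (by omega),
    add_zero, ← prod_Ico_consecutive _ hi₁ (by omega : i ≤ n + 1),
    prod_eq_prod_Ico_succ_bot (by omega : i < n + 1), Ico_add_one_add_one_eq_Ioc, hlt, hgt,
    aeval_psi_hookFactor_self, mul_assoc]

theorem aeval_psi_Theta_self (n : ℕ) :
    aeval (psi (n + 1) (n + 2)) (Theta (n + 1)) =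
      (X (Sum.inr (n + 1, n + 1)) + X (Sum.inr (n + 1, n + 2))) *
        ∏ k ∈ Icc 1 n, hookFactor (n + 2) k := by
  rw [Theta_eq_mul_prod_hookFactor, map_mul, map_prod, aeval_psi_X_inr, if_pos ⟨rfl, le_rfl⟩,
    Ico_add_one_right_eq_Icc]
  exact congrArg _ <| prod_congr rfl fun k hk =>
    aeval_psi_hookFactor_of_lt (Nat.lt_succ_of_le (mem_Icc.1 hk).2) le_rfl

/-- Leaf-insertion recursion: `Θ_{n+1} = y_{n+1,n+1} · ∑_{i=1}^{n} x_i · ψ^i_{n+1}(Θ_n)`. -/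
theorem theta_leaf_insertion (n : ℕ) (hn : 1 ≤ n) :
    Theta (n + 1) =
      X (Sum.inr (n + 1, n + 1)) *
        ∑ i ∈ Finset.Icc 1 n, X (Sum.inl i) * MvPolynomial.aeval (psi i (n + 1)) (Theta n) := by
  obtain ⟨m, rfl⟩ := Nat.exists_eq_add_of_le' hn
  have htelescope := sum_mul_prod_Ico_mul_prod_Ioc_eq (m := m) (a := hookFactor (m + 2))
    (b := hookFactor (m + 1)) (c := fun k => X (Sum.inr (k, m + 2))) (x := fun k => X (Sum.inl k))
    fun k hk => hookFactor_succ (by omega)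
  have hsum : ∑ i ∈ Icc 1 m, X (Sum.inl i) * aeval (psi i (m + 2)) (Theta (m + 1)) =
      X (Sum.inr (m + 1, m + 1)) * ((∑ j ∈ Icc 1 m, X (Sum.inl j)) *
        ∏ k ∈ Icc 1 m, hookFactor (m + 2) k) := by
    rw [← htelescope, mul_sum]
    refine sum_congr rfl fun i hi => ?_
    rw [aeval_psi_Theta_of_le (mem_Icc.1 hi).1 (mem_Icc.1 hi).2]
    ring
  rw [sum_Icc_succ_top (by omega), hsum, aeval_psi_Theta_self, Theta_eq_mul_prod_hookFactor,
    prod_Ico_succ_top (by omega), Ico_add_one_right_eq_Icc, hookFactor_succ le_rfl,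
    hookFactor_self, sum_Icc_succ_top (by omega)]
  ring
end

section
/- Binomial-type convolution for the hook-sum polynomials (Strehl's identity, polynomial form): for a finite set A of positive integers define w_A(z) = z·∏_{i ∈ A, i ≠ max(A)} ( z + ∑_{j ∈ A, j ≤ i} x_j + ∑_{j ∈ A, j > i} y_{i,j} ) for A nonempty, and w_∅(z) = 1. Then w_A(u+v) = ∑_{B ⊔ C = A} w_B(u)·w_C(v), where the sum is over ordered pairs (B,C) of disjoint sets with union A. -/
open scoped Classical in
/-- Strehl's polynomial `w_A(z) = z ∏_{i ∈ A, i ≠ max A} (z + ∑_{j∈A, j≤i} x_j + ∑_{j∈A, j>i} y_{i,j})`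
for nonempty `A`, and `w_∅(z) = 1`.  (An element `i ∈ A` is not the maximum iff some larger
element of `A` exists.) -/
noncomputable def strehlW {R : Type*} [CommRing R] (x : ℕ → R) (y : ℕ → ℕ → R)
    (S : Finset ℕ) (z : R) : R :=
  if S.Nonempty then
    z * ∏ i ∈ S.filter (fun i => ∃ j ∈ S, i < j),
      (z + ∑ j ∈ S.filter (fun j => j ≤ i), x j + ∑ j ∈ S.filter (fun j => i < j), y i j)
  else 1

/-!
Write `hook S i = ∑_{j ∈ S, j ≤ i} x_j + ∑_{j ∈ S, j > i} y_{i,j}` and, for coefficients `c`,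
`F^c_S(z) = ∏_{i ∈ S} (z + hook S i + c_i)`, so that `w_{S ∪ {M}}(z) = z F^{y_{·,M}}_S(z)` when
`M > max S`. Removing the largest element `M` of `A`, the theorem reduces to the generalisation
`F^c_A(u + v) = ∑_{B ⊆ A} w_B(u) F^c_{A ∖ B}(v)`, proved by the same induction. Its inductive step
needs that the convolution `∑_{B ⊆ A} F^c_B(u) F^{c'}_{A ∖ B}(v)` depends on `c, c'` only through
`c + c'`: it is affine in each pair `(c_k, c'_k)`, and by induction both slopes are the same
convolution over `A ∖ {k}`.
-/

open Finset Function

namespace Finset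

variable {α β : Type*} [DecidableEq α] [AddCommMonoid β]

theorem sum_powerset_insert_sdiff {k : α} {A : Finset α} (hk : k ∉ A)
    (f : Finset α → Finset α → β) :
    ∑ B ∈ (insert k A).powerset, f B (insert k A \ B) =
      ∑ B ∈ A.powerset, (f B (insert k (A \ B)) + f (insert k B) (A \ B)) := by
  rw [sum_powerset_insert hk, ← sum_add_distrib]
  refine sum_congr rfl fun B hB => ?_
  have hkB : k ∉ B := fun h => hk (mem_powerset.mp hB h)
  rw [insert_sdiff_of_notMem _ hkB, insert_sdiff_insert, sdiff_insert_of_notMem hk]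

theorem sum_powerset_sdiff_comm (A : Finset α) (f : Finset α → Finset α → β) :
    ∑ B ∈ A.powerset, f B (A \ B) = ∑ B ∈ A.powerset, f (A \ B) B := by
  refine sum_nbij' (A \ ·) (A \ ·) (fun _ _ => mem_powerset.mpr sdiff_subset)
    (fun _ _ => mem_powerset.mpr sdiff_subset)
    (fun B hB => sdiff_sdiff_eq_self (mem_powerset.mp hB))
    (fun B hB => sdiff_sdiff_eq_self (mem_powerset.mp hB)) fun B hB => ?_
  rw [sdiff_sdiff_eq_self (mem_powerset.mp hB)]

end Finset

namespace Strehl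

variable {R : Type*} (x : ℕ → R) (y : ℕ → ℕ → R)

def hookShift (k i : ℕ) : R :=
  if k ≤ i then x k else y i k

variable {x y} in
theorem hookShift_of_lt {k i : ℕ} (h : i < k) : hookShift x y k i = y i k :=
  if_neg (not_le.mpr h)

variable [CommRing R]

def hook (S : Finset ℕ) (i : ℕ) : R :=
  ∑ j ∈ S with j ≤ i, x j + ∑ j ∈ S with i < j, y i j

def hookProd (c : ℕ → R) (S : Finset ℕ) (z : R) : R :=
  ∏ i ∈ S, (z + hook x y S i + c i)

def convSum (c c' : ℕ → R) (A : Finset ℕ) (u v : R) : R :=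
  ∑ B ∈ A.powerset, hookProd x y c B u * hookProd x y c' (A \ B) v

variable {x y}

theorem hook_insert {k i : ℕ} {S : Finset ℕ} (hk : k ∉ S) :
    hook x y (insert k S) i = hook x y S i + hookShift x y k i := by
  have hkS : ∀ p : ℕ → Prop, [DecidablePred p] → k ∉ S.filter p := fun _ _ h =>
    hk (mem_filter.mp h).1
  unfold hook hookShift
  rw [filter_insert, filter_insert]
  by_cases hki : k ≤ i
  · rw [if_pos hki, if_neg (by omega), if_pos hki, sum_insert (hkS _)]
    ring
  · rw [if_neg hki, if_pos (by omega), if_neg hki, sum_insert (hkS _)]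
    ring

theorem hook_of_forall_le {S : Finset ℕ} {M : ℕ} (h : ∀ j ∈ S, j ≤ M) :
    hook x y S M = ∑ j ∈ S, x j := by
  rw [hook, filter_true_of_mem h, filter_false_of_mem fun j hj => not_lt.mpr (h j hj),
    sum_empty, add_zero]

theorem hookProd_congr {c c' : ℕ → R} {S : Finset ℕ} (h : ∀ i ∈ S, c i = c' i) (z : R) :
    hookProd x y c S z = hookProd x y c' S z :=
  prod_congr rfl fun i hi => by rw [h i hi]

theorem hookProd_insert {k : ℕ} {S : Finset ℕ} (hk : k ∉ S) (c : ℕ → R) (z : R) :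
    hookProd x y c (insert k S) z =
      (z + hook x y (insert k S) k + c k) * hookProd x y (c + hookShift x y k) S z := by
  rw [hookProd, prod_insert hk]
  congr 1
  refine prod_congr rfl fun i hi => ?_
  rw [hook_insert hk, Pi.add_apply]
  ring

theorem hookProd_insert_max {M : ℕ} {S : Finset ℕ} (hS : ∀ j ∈ S, j < M) (c : ℕ → R) (z : R) :
    hookProd x y c (insert M S) z =
      (z + ∑ j ∈ insert M S, x j + c M) * hookProd x y (c + fun i => y i M) S z := by
  have hM : M ∉ S := fun h => lt_irrefl M (hS M h)
  rw [hookProd_insert hM, hook_of_forall_le fun j hj => ?_]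
  · exact congrArg _ (hookProd_congr (fun i hi => by simp [hookShift_of_lt (hS i hi)]) z)
  · rcases mem_insert.mp hj with rfl | hj
    exacts [le_rfl, (hS j hj).le]

theorem strehlW_empty (z : R) : strehlW x y ∅ z = 1 := by
  simp [strehlW]

theorem strehlW_insert_max {M : ℕ} {B : Finset ℕ} (hB : ∀ j ∈ B, j < M) (z : R) :
    strehlW x y (insert M B) z = z * hookProd x y (fun i => y i M) B z := by
  have hM : M ∉ B := fun h => lt_irrefl M (hB M h)
  have hnonmax : (insert M B).filter (fun i => ∃ j ∈ insert M B, i < j) = B := by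
    ext i
    simp only [mem_filter, mem_insert]
    constructor
    · rintro ⟨rfl | hi, j, hj, hij⟩
      · rcases hj with rfl | hj
        exacts [absurd hij (lt_irrefl _), absurd (hB j hj) (lt_asymm hij)]
      · exact hi
    · exact fun hi => ⟨Or.inr hi, M, Or.inl rfl, hB i hi⟩
  rw [strehlW, if_pos (insert_nonempty M B), hnonmax]
  refine congrArg _ (prod_congr rfl fun i hi => ?_)
  have := hook_insert (x := x) (y := y) (i := i) hM
  rw [hook, hook, hookShift_of_lt (hB i hi)] at this
  rw [add_assoc z, this, hook]
  ring

theorem add_sum_mul_strehlW (B : Finset ℕ) (u : R) :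
    (u + ∑ j ∈ B, x j) * strehlW x y B u = u * hookProd x y 0 B u := by
  induction B using Finset.induction_on_max with
  | empty => simp [strehlW_empty, hookProd]
  | insert M B hB _ =>
    rw [strehlW_insert_max hB, hookProd_insert_max hB, zero_add, Pi.zero_apply]
    ring

theorem convSum_congr {c c' d d' : ℕ → R} {A : Finset ℕ} (hc : ∀ i ∈ A, c i = d i)
    (hc' : ∀ i ∈ A, c' i = d' i) (u v : R) : convSum x y c c' A u v = convSum x y d d' A u v :=
  sum_congr rfl fun B hB => by
    rw [hookProd_congr (fun i hi => hc i (mem_powerset.mp hB hi)),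
      hookProd_congr (fun i hi => hc' i (sdiff_subset hi))]

theorem convSum_insert {k : ℕ} {A : Finset ℕ} (hk : k ∉ A) (c c' : ℕ → R) (u v : R) :
    convSum x y c c' (insert k A) u v =
      ∑ B ∈ A.powerset, (v + hook x y (insert k (A \ B)) k) *
          (hookProd x y c B u * hookProd x y (c' + hookShift x y k) (A \ B) v) +
        ∑ B ∈ A.powerset, (u + hook x y (insert k B) k) *
          (hookProd x y (c + hookShift x y k) B u * hookProd x y c' (A \ B) v) +
        c' k * convSum x y c (c' + hookShift x y k) A u v +
        c k * convSum x y (c + hookShift x y k) c' A u v := by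
  rw [convSum, sum_powerset_insert_sdiff hk fun B C => hookProd x y c B u * hookProd x y c' C v]
  simp only [convSum, mul_sum, ← sum_add_distrib]
  refine sum_congr rfl fun B hB => ?_
  have hkB : k ∉ B := fun h => hk (mem_powerset.mp hB h)
  have hkAB : k ∉ A \ B := fun h => hk (mem_sdiff.mp h).1
  rw [hookProd_insert hkAB, hookProd_insert hkB]
  ring

theorem convSum_insert_eq {k : ℕ} {A : Finset ℕ} (hk : k ∉ A) {c c' d d' : ℕ → R}
    (hc : ∀ i ∈ A, c i = d i) (hc' : ∀ i ∈ A, c' i = d' i) (hck : c k + c' k = d k + d' k)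
    {u v : R} (ih : ∀ e e' f f' : ℕ → R, (∀ i ∈ A, e i + e' i = f i + f' i) →
      convSum x y e e' A u v = convSum x y f f' A u v) :
    convSum x y c c' (insert k A) u v = convSum x y d d' (insert k A) u v := by
  set s := hookShift x y k
  have slope : ∀ e e', (∀ i ∈ A, e i = c i) → (∀ i ∈ A, e' i = c' i) →
      convSum x y e (e' + s) A u v = convSum x y (c + s) c' A u v ∧
        convSum x y (e + s) e' A u v = convSum x y (c + s) c' A u v := fun e e' he he' =>
    ⟨ih _ _ _ _ fun i hi => by simp only [Pi.add_apply, he i hi, he' i hi]; ring,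
      ih _ _ _ _ fun i hi => by simp only [Pi.add_apply, he i hi, he' i hi]⟩
  obtain ⟨hc₁, hc₂⟩ := slope c c' (fun _ _ => rfl) fun _ _ => rfl
  obtain ⟨hd₁, hd₂⟩ := slope d d' (fun i hi => (hc i hi).symm) fun i hi => (hc' i hi).symm
  have hs : ∀ i ∈ A, (c + s) i = (d + s) i := fun i hi => by simp only [Pi.add_apply, hc i hi]
  have hs' : ∀ i ∈ A, (c' + s) i = (d' + s) i := fun i hi => by
    simp only [Pi.add_apply, hc' i hi]
  rw [convSum_insert hk, convSum_insert hk, hc₁, hc₂, hd₁, hd₂, add_assoc _ (c' k * _),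
    add_assoc _ (d' k * _), ← add_mul, ← add_mul, add_comm (c' k), add_comm (d' k), hck]
  congr 2 <;> refine sum_congr rfl fun B hB => ?_ <;> have hB := mem_powerset.mp hB
  · rw [hookProd_congr fun i hi => hc i (hB hi),
      hookProd_congr fun i hi => hs' i (sdiff_subset hi)]
  · rw [hookProd_congr fun i hi => hs i (hB hi),
      hookProd_congr fun i hi => hc' i (sdiff_subset hi)]

theorem convSum_eq_of_add_eq {u v : R} (A : Finset ℕ) {c c' d d' : ℕ → R}
    (h : ∀ i ∈ A, c i + c' i = d i + d' i) : convSum x y c c' A u v = convSum x y d d' A u v := by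
  induction A using Finset.strongInduction generalizing c c' d d' with
  | H A ih =>
    -- equalise `c` and `d` one coordinate of `D` at a time
    suffices moves : ∀ D : Finset ℕ, ∀ c c' d d' : ℕ → R, (∀ i ∈ A, c i + c' i = d i + d' i) →
        (∀ i ∈ A, i ∉ D → c i = d i) → convSum x y c c' A u v = convSum x y d d' A u v from
      moves A c c' d d' h fun i hi hiA => absurd hi hiA
    intro D
    induction D using Finset.induction_on with
    | empty =>
      intro c c' d d' h hcd
      refine convSum_congr (fun i hi => hcd i hi (notMem_empty i)) (fun i hi => ?_) u v
      have := h i hi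
      rw [hcd i hi (notMem_empty i)] at this
      exact add_left_cancel this
    | insert k D _ ihD =>
      intro c c' d d' h hcd
      by_cases hkA : k ∈ A
      · have hsum : ∀ i ∈ A, update c k (d k) i + update c' k (d' k) i = d i + d' i := by
          intro i hi
          rcases eq_or_ne i k with rfl | hik
          · simp only [update_self]
          · simp only [update_of_ne hik, h i hi]
        calc convSum x y c c' A u v
            = convSum x y (update c k (d k)) (update c' k (d' k)) A u v := by
              rw [← insert_erase hkA]
              refine convSum_insert_eq (notMem_erase k A)
                (fun i hi => (update_of_ne (ne_of_mem_erase hi) _ _).symm)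
                (fun i hi => (update_of_ne (ne_of_mem_erase hi) _ _).symm)
                (by rw [h k hkA, update_self, update_self])
                fun e e' f f' hef => ih _ (erase_ssubset hkA) hef
          _ = convSum x y d d' A u v := by
            refine ihD _ _ d d' hsum fun i hi hiD => ?_
            rcases eq_or_ne i k with rfl | hik
            · exact update_self ..
            · rw [update_of_ne hik]
              exact hcd i hi (by simp only [mem_insert, not_or]; exact ⟨hik, hiD⟩)
      · exact ihD c c' d d' h fun i hi hiD =>
          hcd i hi (by simp only [mem_insert, not_or]; exact ⟨fun hik => hkA (hik ▸ hi), hiD⟩)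

theorem hookProd_add (c : ℕ → R) (A : Finset ℕ) (u v : R) :
    hookProd x y c A (u + v) = ∑ B ∈ A.powerset, strehlW x y B u * hookProd x y c (A \ B) v := by
  induction A using Finset.induction_on_max generalizing c with
  | empty => simp [hookProd, strehlW_empty]
  | insert M A hA ih =>
    have hM : M ∉ A := fun h => lt_irrefl M (hA M h)
    set yM : ℕ → R := fun i => y i M
    have transfer : convSum x y yM c A u v = convSum x y 0 (c + yM) A u v :=
      convSum_eq_of_add_eq A fun i _ => by simp only [Pi.add_apply, Pi.zero_apply]; ring
    rw [convSum, convSum] at transfer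
    rw [sum_powerset_insert_sdiff hM fun B C => strehlW x y B u * hookProd x y c C v,
      sum_add_distrib, hookProd_insert_max hA, ih, mul_sum]
    have hAB : ∀ B ∈ A.powerset, ∀ j ∈ A \ B, j < M := fun _ _ j hj => hA j (mem_sdiff.mp hj).1
    have hB : ∀ B ∈ A.powerset, ∀ j ∈ B, j < M := fun _ hB j hj => hA j (mem_powerset.mp hB hj)
    have with_max : ∑ B ∈ A.powerset, strehlW x y (insert M B) u * hookProd x y c (A \ B) v =
        ∑ B ∈ A.powerset, (u + ∑ j ∈ B, x j) *
          (strehlW x y B u * hookProd x y (c + yM) (A \ B) v) :=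
      calc _ = ∑ B ∈ A.powerset, u * (hookProd x y yM B u * hookProd x y c (A \ B) v) :=
            sum_congr rfl fun B hB' => by rw [strehlW_insert_max (hB B hB'), mul_assoc]
        _ = ∑ B ∈ A.powerset, u * (hookProd x y 0 B u * hookProd x y (c + yM) (A \ B) v) := by
            rw [← mul_sum, ← mul_sum, transfer]
        _ = _ := sum_congr rfl fun B _ => by rw [← mul_assoc, ← add_sum_mul_strehlW]; ring
    rw [with_max, ← sum_add_distrib]
    refine sum_congr rfl fun B hB' => ?_
    have hMAB : M ∉ A \ B := fun h => hM (mem_sdiff.mp h).1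
    rw [hookProd_insert_max (hAB B hB'), sum_insert hM, sum_insert hMAB,
      ← sum_sdiff (mem_powerset.mp hB')]
    ring

end Strehl

open Strehl in
theorem strehl_convolution_general {R : Type*} [CommRing R] (x : ℕ → R) (y : ℕ → ℕ → R)
    (A : Finset ℕ) (u v : R) :
    strehlW x y A (u + v) = ∑ B ∈ A.powerset, strehlW x y B u * strehlW x y (A \ B) v := by
  induction A using Finset.induction_on_max with
  | empty => simp [strehlW_empty]
  | insert M A hA _ =>
    have hM : M ∉ A := fun h => lt_irrefl M (hA M h)
    have hAB : ∀ B ∈ A.powerset, ∀ j ∈ A \ B, j < M := fun _ _ j hj => hA j (mem_sdiff.mp hj).1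
    have without_max : ∑ B ∈ A.powerset, strehlW x y B u * strehlW x y (insert M (A \ B)) v =
        v * hookProd x y (fun i => y i M) A (u + v) := by
      rw [hookProd_add, mul_sum]
      exact sum_congr rfl fun B hB' => by rw [strehlW_insert_max (hAB B hB')]; ring
    have with_max : ∑ B ∈ A.powerset, strehlW x y (insert M B) u * strehlW x y (A \ B) v =
        u * hookProd x y (fun i => y i M) A (v + u) := by
      rw [sum_powerset_sdiff_comm A fun B C => strehlW x y (insert M B) u * strehlW x y C v,
        hookProd_add, mul_sum]
      exact sum_congr rfl fun B hB' => by rw [strehlW_insert_max (hAB B hB')]; ring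
    rw [sum_powerset_insert_sdiff hM fun B C => strehlW x y B u * strehlW x y C v,
      sum_add_distrib, without_max, with_max, strehlW_insert_max hA, add_comm v u]
    ring

/-- Strehl's binomial-type convolution: `w_A(u+v) = ∑_{B ⊔ C = A} w_B(u) w_C(v)`,
the sum being over ordered pairs `(B, C = A \ B)` of disjoint sets with union `A`. -/
theorem strehl_convolution {R : Type*} [CommRing R] (x : ℕ → R) (y : ℕ → ℕ → R)
    (A : Finset ℕ) (hA : ∀ i ∈ A, 0 < i) (u v : R) :
    strehlW x y A (u + v) = ∑ B ∈ A.powerset, strehlW x y B u * strehlW x y (A \ B) v :=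
  strehl_convolution_general x y A u v
end

section
/- Convolution identity for Θ (Theorem 1.4 of the paper): for a finite set A of positive integers with |A| ≥ 1, define Θ_{A∪{0}} = x_0 · y_{M,M} · ∏_{i ∈ A∖{M}} ( y_{i,i}·(x_0 + ∑_{j∈A, j≤i} x_j) + x_i·∑_{j∈A, j>i} y_{i,j} ) where M = max(A), and Θ_{{0}} = 1 (when A = ∅, with the convention that the product is empty and the factor x_0·y is replaced by 1). Then Θ_{A∪{0}}|_{x_0 = u+v} = ∑_{B ⊔ C = A} Θ_{B∪{0}}|_{x_0=u} · Θ_{C∪{0}}|_{x_0=v}. -/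
open scoped Classical in
/-- `Θ_{A ∪ {0}}` with `x_0` specialized to `z`: for nonempty `A` with `M = max A`, this is
`z · y_{M,M} · ∏_{i ∈ A∖{M}} (y_{i,i}(z + ∑_{j∈A, j≤i} x_j) + x_i ∑_{j∈A, j>i} y_{i,j})`,
and `Θ_{{0}} = 1` when `A = ∅`. -/
noncomputable def Theta0 {R : Type*} [CommRing R] (x : ℕ → R) (y : ℕ → ℕ → R)
    (A : Finset ℕ) (z : R) : R :=
  if h : A.Nonempty then
    z * y (A.max' h) (A.max' h) *
      ∏ i ∈ A.filter (fun i => ∃ j ∈ A, i < j),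
        (y i i * (z + ∑ j ∈ A.filter (fun j => j ≤ i), x j)
          + x i * ∑ j ∈ A.filter (fun j => i < j), y i j)
  else 1

/-! Write `Θ_{A∪{0}}(z) = z · Θ'(A, z)` (`Θ' = thetaCore`). For `m = min A` and `C = A ∖ {m}`,
`Θ'(A, t) = (y_{mm}(t + x_m) + x_m ∑_{j∈C} y_{mj}) · Θ'(C, t + x_m)`, so removing `m` shifts the
argument of the remaining factors. To absorb such shifts we prove, by induction on `A` through
its minimum, the Hurwitz-type identity `Ξ_w(A, u + v) = ∑_{B ⊆ A} Ξ_w(B, u) Ξ_w(A ∖ B, v)` for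
`Ξ_w(A, z) = z · Θ'(A, z + ∑_{i∈A} w_i)` (`weightedTheta`) and all weights `w`. Expanding both
sides at `m` gives two instances of the induction hypothesis plus terms linear in
`c_j = y_{mm} w_j + x_m y_{mj}` (`j ∈ C`); the coefficient of each `c_j` is the induction
hypothesis for the weights `w + (w_m + x_m) δ_j`. -/

open Finset

theorem Finset.filter_exists_lt_eq_erase_max' {α : Type*} [LinearOrder α] (s : Finset α)
    (h : s.Nonempty) [DecidablePred fun i => ∃ j ∈ s, i < j] :
    s.filter (fun i => ∃ j ∈ s, i < j) = s.erase (s.max' h) := by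
  ext i
  simp only [mem_filter, mem_erase]
  constructor
  · rintro ⟨hi, j, hj, hij⟩
    exact ⟨(hij.trans_le (le_max' s j hj)).ne, hi⟩
  · rintro ⟨hne, hi⟩
    exact ⟨hi, s.max' h, s.max'_mem h, lt_of_le_of_ne (le_max' s i hi) hne⟩

theorem Finset.sum_powerset_sum_mul_add_sum_sdiff_mul {ι R : Type*} [DecidableEq ι]
    [NonUnitalNonAssocSemiring R] (C : Finset ι) (c : ι → R) (f g : Finset ι → R) (H : R)
    (h : ∀ j ∈ C, ∑ B ∈ C.powerset, (if j ∈ B then f B else g B) = H) :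
    ∑ B ∈ C.powerset, ((∑ i ∈ B, c i) * f B + (∑ i ∈ C \ B, c i) * g B)
      = (∑ i ∈ C, c i) * H := by
  calc _ = ∑ B ∈ C.powerset, ∑ j ∈ C, c j * (if j ∈ B then f B else g B) := by
        refine sum_congr rfl fun B hB => ?_
        simp only [mul_ite, sum_ite, filter_mem_eq_inter,
          inter_eq_right.2 (mem_powerset.1 hB), ← sdiff_eq_filter, sum_mul]
    _ = ∑ j ∈ C, c j * H := by
        rw [sum_comm]
        exact sum_congr rfl fun j hj => by rw [← mul_sum, h j hj]
    _ = _ := (sum_mul ..).symm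

section Theta

variable {ι R : Type*} [LinearOrder ι] [CommRing R] (x : ι → R) (y : ι → ι → R)

def thetaFactor (A : Finset ι) (z : R) (i : ι) : R :=
  y i i * (z + ∑ j ∈ A with j ≤ i, x j) + x i * ∑ j ∈ A with i < j, y i j

def thetaCore (A : Finset ι) (z : R) : R :=
  if h : A.Nonempty then
    y (A.max' h) (A.max' h) * ∏ i ∈ A.erase (A.max' h), thetaFactor x y A z i
  else 1

def weightedTheta (w : ι → R) (A : Finset ι) (z : R) : R :=
  if A.Nonempty then z * thetaCore x y A (z + ∑ i ∈ A, w i) else 1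

variable {x y}

theorem thetaFactor_insert_self {m : ι} {C : Finset ι} (hm : ∀ c ∈ C, m < c) (t : R) :
    thetaFactor x y (insert m C) t m = y m m * (t + x m) + x m * ∑ j ∈ C, y m j := by
  have hle : C.filter (· ≤ m) = ∅ := filter_false_of_mem fun c hc => not_le.2 (hm c hc)
  have hlt : C.filter (m < ·) = C := filter_true_of_mem hm
  simp [thetaFactor, filter_insert, hle, hlt]

theorem thetaFactor_insert_of_lt {m i : ι} {C : Finset ι} (hm : ∀ c ∈ C, m < c) (hi : m < i)
    (t : R) : thetaFactor x y (insert m C) t i = thetaFactor x y C (t + x m) i := by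
  have hmC : m ∉ C.filter (· ≤ i) := fun h => (hm m (mem_filter.1 h).1).false
  simp only [thetaFactor, filter_insert, if_pos hi.le, if_neg (not_lt.2 hi.le), sum_insert hmC]
  ring

theorem thetaCore_singleton (a : ι) (z : R) : thetaCore x y {a} z = y a a := by
  simp [thetaCore]

theorem thetaCore_insert_of_lt {m : ι} {C : Finset ι} (hC : C.Nonempty) (hm : ∀ c ∈ C, m < c)
    (t : R) : thetaCore x y (insert m C) t
      = (y m m * (t + x m) + x m * ∑ j ∈ C, y m j) * thetaCore x y C (t + x m) := by
  have hmM : m < C.max' hC := hm _ (C.max'_mem hC)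
  have hmax : (insert m C).max' (C.insert_nonempty m) = C.max' hC := by
    rw [max'_insert m C hC, max_eq_right hmM.le]
  have hmC : m ∉ C.erase (C.max' hC) := fun h => (hm m (mem_of_mem_erase h)).false
  rw [thetaCore, dif_pos (C.insert_nonempty m), thetaCore, dif_pos hC, hmax,
    erase_insert_of_ne hmM.ne, prod_insert hmC, thetaFactor_insert_self hm,
    prod_congr rfl fun i hi => thetaFactor_insert_of_lt hm (hm i (mem_of_mem_erase hi)) t]
  ring

theorem weightedTheta_insert_of_lt {m : ι} {D : Finset ι} (hm : ∀ c ∈ D, m < c) (w : ι → R)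
    (z : R) : weightedTheta x y w (insert m D) z
      = y m m * z * weightedTheta x y w D (z + (w m + x m))
        + (∑ i ∈ D, (y m m * w i + x m * y m i))
          * (z * thetaCore x y D (z + (w m + x m) + ∑ i ∈ D, w i)) := by
  rcases D.eq_empty_or_nonempty with rfl | hD
  · simp [weightedTheta, thetaCore_singleton, mul_comm]
  have hmD : m ∉ D := fun h => (hm m h).false
  have hz : z + (w m + ∑ i ∈ D, w i) + x m = z + (w m + x m) + ∑ i ∈ D, w i := by ring
  rw [weightedTheta, if_pos (D.insert_nonempty m), sum_insert hmD, thetaCore_insert_of_lt hD hm,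
    hz, weightedTheta, if_pos hD, sum_add_distrib, ← mul_sum, ← mul_sum]
  ring

theorem weightedTheta_add_single_of_notMem (w : ι → R) {j : ι} (s : R) {D : Finset ι}
    (hj : j ∉ D) (z : R) :
    weightedTheta x y (w + Pi.single j s) D z = weightedTheta x y w D z := by
  simp [weightedTheta, sum_add_distrib, sum_pi_single', hj]

theorem weightedTheta_add_single_of_mem (w : ι → R) {j : ι} (s : R) {D : Finset ι}
    (hj : j ∈ D) (z : R) : weightedTheta x y (w + Pi.single j s) D z
      = z * thetaCore x y D (z + s + ∑ i ∈ D, w i) := by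
  rw [weightedTheta, if_pos ⟨j, hj⟩]
  simp only [Pi.add_apply, sum_add_distrib, sum_pi_single', if_pos hj]
  rw [add_comm _ s, ← add_assoc]

theorem weightedTheta_convolution_insert_of_lt {m : ι} {C : Finset ι} (hm : ∀ c ∈ C, m < c)
    (ih : ∀ (w : ι → R) (u v : R), weightedTheta x y w C (u + v)
      = ∑ B ∈ C.powerset, weightedTheta x y w B u * weightedTheta x y w (C \ B) v)
    (w : ι → R) (u v : R) :
    weightedTheta x y w (insert m C) (u + v)
      = ∑ B ∈ (insert m C).powerset,
          weightedTheta x y w B u * weightedTheta x y w (insert m C \ B) v := by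
  set s := w m + x m
  set Q : Finset ι → R → R := fun D z => z * thetaCore x y D (z + s + ∑ i ∈ D, w i)
  set c : ι → R := fun i => y m m * w i + x m * y m i
  have hmC : m ∉ C := fun h => (hm m h).false
  -- the induction hypothesis for the weights `w + s δ_j`
  have shifted : ∀ j ∈ C, ∑ B ∈ C.powerset,
      (if j ∈ B then Q B u * weightedTheta x y w (C \ B) v
        else weightedTheta x y w B u * Q (C \ B) v) = Q C (u + v) := by
    intro j hj
    rw [show Q C (u + v) = weightedTheta x y (w + Pi.single j s) C (u + v) from
      (weightedTheta_add_single_of_mem w s hj _).symm, ih]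
    refine sum_congr rfl fun B _ => ?_
    split_ifs with hjB
    · rw [weightedTheta_add_single_of_mem w s hjB,
        weightedTheta_add_single_of_notMem w s (notMem_sdiff_of_mem_right hjB)]
    · rw [weightedTheta_add_single_of_notMem w s hjB,
        weightedTheta_add_single_of_mem w s (mem_sdiff.2 ⟨hj, hjB⟩)]
  have hu := ih w (u + s) v
  have hv := ih w u (v + s)
  rw [add_right_comm] at hu
  rw [← add_assoc] at hv
  calc weightedTheta x y w (insert m C) (u + v)
      = y m m * v * weightedTheta x y w C (u + v + s)
        + y m m * u * weightedTheta x y w C (u + v + s)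
        + (∑ i ∈ C, c i) * Q C (u + v) := by
        rw [weightedTheta_insert_of_lt hm]; ring
    _ = y m m * v * ∑ B ∈ C.powerset,
            weightedTheta x y w B u * weightedTheta x y w (C \ B) (v + s)
        + y m m * u * ∑ B ∈ C.powerset,
            weightedTheta x y w B (u + s) * weightedTheta x y w (C \ B) v
        + ∑ B ∈ C.powerset, ((∑ i ∈ B, c i) * (Q B u * weightedTheta x y w (C \ B) v)
            + (∑ i ∈ C \ B, c i) * (weightedTheta x y w B u * Q (C \ B) v)) := by
        rw [← hu, ← hv, sum_powerset_sum_mul_add_sum_sdiff_mul C c _ _ _ shifted]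
    _ = _ := by
        rw [sum_powerset_insert hmC, mul_sum, mul_sum, ← sum_add_distrib, ← sum_add_distrib,
          ← sum_add_distrib]
        refine sum_congr rfl fun B hB => ?_
        have hBC := mem_powerset.1 hB
        rw [insert_sdiff_of_notMem _ (fun h => hmC (hBC h)), insert_sdiff_insert,
          sdiff_insert_of_notMem hmC, weightedTheta_insert_of_lt fun c hc => hm c (sdiff_subset hc),
          weightedTheta_insert_of_lt fun c hc => hm c (hBC hc)]
        ring

variable (x y) in
theorem weightedTheta_convolution (w : ι → R) (A : Finset ι) (u v : R) :
    weightedTheta x y w A (u + v)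
      = ∑ B ∈ A.powerset, weightedTheta x y w B u * weightedTheta x y w (A \ B) v := by
  induction A using Finset.induction_on_min generalizing w u v with
  | empty => simp [weightedTheta]
  | insert m C hm ih => exact weightedTheta_convolution_insert_of_lt hm ih w u v

end Theta

theorem weightedTheta_zero {R : Type*} [CommRing R] (x : ℕ → R) (y : ℕ → ℕ → R) :
    weightedTheta x y 0 = Theta0 x y := by
  funext A z
  rcases A.eq_empty_or_nonempty with rfl | hA
  · simp [weightedTheta, Theta0]
  · simp only [weightedTheta, Theta0, thetaCore, thetaFactor, if_pos hA, dif_pos hA,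
      filter_exists_lt_eq_erase_max' A hA, Pi.zero_apply, sum_const_zero, add_zero, mul_assoc]

theorem theta_convolution_general {R : Type*} [CommRing R] (x : ℕ → R) (y : ℕ → ℕ → R)
    (A : Finset ℕ) (u v : R) :
    Theta0 x y A (u + v) = ∑ B ∈ A.powerset, Theta0 x y B u * Theta0 x y (A \ B) v := by
  simpa only [weightedTheta_zero] using weightedTheta_convolution x y 0 A u v

/-- Convolution identity for `Θ` (Theorem 1.4 of the paper):
`Θ_{A∪{0}}|_{x_0 = u+v} = ∑_{B ⊔ C = A} Θ_{B∪{0}}|_{x_0 = u} · Θ_{C∪{0}}|_{x_0 = v}`. -/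
theorem theta_convolution {R : Type*} [CommRing R] (x : ℕ → R) (y : ℕ → ℕ → R)
    (A : Finset ℕ) (hA : A.Nonempty) (hpos : ∀ i ∈ A, 0 < i) (u v : R) :
    Theta0 x y A (u + v) = ∑ B ∈ A.powerset, Theta0 x y B u * Theta0 x y (A \ B) v :=
  theta_convolution_general x y A u v
end

section
/- Determinant evaluation underlying the weighted matrix-tree computation: let n ≥ 2 and let K be the n×n matrix with entries k_{i,j} = -x_i·y_{i,j} for i < j, k_{i,j} = -x_j·y_{i,i} for i > j, and k_{i,i} = y_{i,i}·∑_{m=1}^{i-1} x_m + x_i·∑_{m=i+1}^{n} y_{i,m}. Let K_{1,1} be K with its first row and column removed. Then det(K_{1,1}) = x_1·y_{n,n}·∏_{i=2}^{n-1} ( y_{i,i}·∑_{j=1}^{i} x_j + x_i·∑_{j=i+1}^{n} y_{i,j} ). -/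
/-!
`K` is a weighted Laplacian: every row sums to zero, so row `i` of `K₁₁` sums to `x₁ y_ii`.
Adding all columns of `K₁₁` to the last one turns that column into `(x₁ y_ii)ᵢ`, and then the
last row is `y_nn` times `w = (-x₂, …, -x_{n-1}, x₁)`. Below the diagonal, row `i` of `K₁₁` is
`y_ii` times the same vector `w`, so subtracting `y_ii w` from every other row leaves a matrix
whose last column vanishes above the corner `x₁` and whose remaining block is upper triangular
with diagonal entries `y_ii ∑_{j ≤ i} x_j + x_i ∑_{j > i} y_ij`.
-/

open Finset Matrix

namespace Matrix

variable {R : Type*} [CommRing R] {n : ℕ}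

theorem det_eq_mul_prod_of_upperTriangular_castSucc (A : Matrix (Fin (n + 1)) (Fin (n + 1)) R)
    (hlast : ∀ i : Fin n, A i.castSucc (Fin.last n) = 0)
    (htri : ∀ i j : Fin n, j < i → A i.castSucc j.castSucc = 0) :
    A.det = A (Fin.last n) (Fin.last n) * ∏ i : Fin n, A i.castSucc i.castSucc := by
  have hminor :
      (A.submatrix Fin.castSucc Fin.castSucc).det = ∏ i : Fin n, A i.castSucc i.castSucc :=
    det_of_isUpperTriangular fun i j hji => htri i j hji
  rw [det_succ_column A (Fin.last n), Fin.sum_univ_castSucc]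
  simp [hlast, Fin.succAbove_last, hminor, ← two_mul, pow_mul]

theorem det_eq_of_sum_row_eq_of_lower_eq (M : Matrix (Fin (n + 1)) (Fin (n + 1)) R) (s : R)
    (d u : Fin (n + 1) → R) (hrow : ∀ i, ∑ j, M i j = s * d i)
    (hlower : ∀ i j, j < i → M i j = d i * u j) :
    M.det = s * d (Fin.last n) *
      ∏ i : Fin n, (M i.castSucc i.castSucc - d i.castSucc * u i.castSucc) := by
  set w := Function.update u (Fin.last n) s
  set A := M.updateCol (Fin.last n) fun i => s * d i
  have hA : A.det = M.det := by
    simpa [A, hrow] using det_updateCol_sum M (Fin.last n) fun _ => 1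
  have hA_last : A (Fin.last n) = d (Fin.last n) • w := by
    ext j
    rcases (Fin.le_last j).lt_or_eq with hj | rfl
    · simp [A, w, hj.ne, hlower _ _ hj, mul_comm]
    · simp [A, w, mul_comm]
  set B := A.updateRow (Fin.last n) w
  have hB : A.det = d (Fin.last n) * B.det := by
    rw [← det_updateRow_smul, ← hA_last, updateRow_eq_self]
  set c := Function.update d (Fin.last n) 0
  set C : Matrix (Fin (n + 1)) (Fin (n + 1)) R := of fun i j => B i j - c i * w j
  have hC : B.det = C.det :=
    det_eq_of_forall_row_eq_smul_add_const c (Fin.last n) (by simp [c]) fun i j => by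
      simp [C, B, c]
  rw [← hA, hB, hC, det_eq_mul_prod_of_upperTriangular_castSucc C]
  · simp only [C, B, A, w, c, of_apply, updateRow_self, Function.update_self, zero_mul, sub_zero,
      ne_eq, Fin.castSucc_ne_last, not_false_eq_true, updateRow_ne, updateCol_ne,
      Function.update_of_ne]
    ring
  · intro i
    simp only [C, B, A, w, c, of_apply, ne_eq, Fin.castSucc_ne_last, not_false_eq_true,
      updateRow_ne, updateCol_self, Function.update_of_ne, Function.update_self]
    ring
  · intro i j hji
    simp [C, B, A, w, c, Fin.castSucc_ne_last, hlower _ _ (Fin.castSucc_lt_castSucc_iff.mpr hji)]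

end Matrix

theorem Fin.prod_erase_zero_erase_last {M : Type*} [CommMonoid M] {n : ℕ} (f : Fin (n + 2) → M) :
    ∏ i ∈ (univ.erase 0).erase (Fin.last (n + 1)), f i = ∏ i : Fin n, f i.castSucc.succ := by
  have hset : (univ.erase 0).erase (Fin.last (n + 1)) =
      univ.map (Fin.castSuccEmb.trans (Fin.succEmb _)) := by
    ext i
    cases i using Fin.cases with
    | zero => simp
    | succ k => simp [Fin.exists_castSucc_eq]
  rw [hset, prod_map]
  rfl

section WeightedLaplacian

variable {R : Type*} [CommRing R] {m : ℕ}

def weightedLaplacian (x : Fin m → R) (y : Fin m → Fin m → R) : Matrix (Fin m) (Fin m) R :=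
  of fun i j =>
    if i < j then -(x i * y i j)
    else if j < i then -(x j * y i i)
    else y i i * ∑ k ∈ Iio i, x k + x i * ∑ k ∈ Ioi i, y i k

variable (x : Fin m → R) (y : Fin m → Fin m → R)

theorem weightedLaplacian_apply_of_lt {i j : Fin m} (h : i < j) :
    weightedLaplacian x y i j = -(x i * y i j) := by
  simp [weightedLaplacian, h]

theorem weightedLaplacian_apply_of_gt {i j : Fin m} (h : j < i) :
    weightedLaplacian x y i j = -(x j * y i i) := by
  simp [weightedLaplacian, h.not_gt, h]

theorem weightedLaplacian_apply_self (i : Fin m) :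
    weightedLaplacian x y i i = y i i * ∑ k ∈ Iio i, x k + x i * ∑ k ∈ Ioi i, y i k := by
  simp [weightedLaplacian]

theorem weightedLaplacian_sum_row_eq_zero (i : Fin m) : ∑ j, weightedLaplacian x y i j = 0 := by
  have hgt : ∑ j ∈ Ioi i, weightedLaplacian x y i j = -(x i * ∑ k ∈ Ioi i, y i k) := by
    rw [mul_sum, ← sum_neg_distrib]
    exact sum_congr rfl fun j hj => weightedLaplacian_apply_of_lt x y (mem_Ioi.1 hj)
  have hlt : ∑ j ∈ Iio i, weightedLaplacian x y i j = -(y i i * ∑ k ∈ Iio i, x k) := by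
    rw [mul_sum, ← sum_neg_distrib]
    exact sum_congr rfl fun j hj => by
      rw [weightedLaplacian_apply_of_gt x y (mem_Iio.1 hj), mul_comm]
  rw [← add_sum_erase _ _ (mem_univ i), ← compl_singleton, ← Ioi_disjUnion_Iio, sum_disjUnion,
    hgt, hlt, weightedLaplacian_apply_self]
  ring

theorem weightedLaplacian_apply_self_add (i : Fin m) :
    weightedLaplacian x y i i + y i i * x i =
      y i i * ∑ k ∈ Iic i, x k + x i * ∑ k ∈ Ioi i, y i k := by
  rw [weightedLaplacian_apply_self, ← Iio_insert, sum_insert notMem_Iio_self]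
  ring

end WeightedLaplacian

/-- Determinant evaluation underlying the weighted matrix-tree computation, for `n ≥ 2`
(here `n + 2`).  Indices `{1, …, n}` are encoded as `Fin n`; `K_{1,1}` is `K` with its first
row and column removed, realized as the submatrix along `Fin.succ`. -/
theorem matrix_tree_determinant {R : Type*} [CommRing R] (n : ℕ)
    (x : Fin (n + 2) → R) (y : Fin (n + 2) → Fin (n + 2) → R) :
    Matrix.det
      (((Matrix.of fun i j : Fin (n + 2) =>
          if i < j then -(x i * y i j)
          else if j < i then -(x j * y i i)
          else y i i * ∑ m ∈ Finset.Iio i, x m + x i * ∑ m ∈ Finset.Ioi i, y i m) :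
        Matrix (Fin (n + 2)) (Fin (n + 2)) R).submatrix Fin.succ Fin.succ)
    = x 0 * y (Fin.last (n + 1)) (Fin.last (n + 1)) *
        ∏ i ∈ (Finset.univ.erase (0 : Fin (n + 2))).erase (Fin.last (n + 1)),
          (y i i * ∑ j ∈ Finset.Iic i, x j + x i * ∑ j ∈ Finset.Ioi i, y i j) := by
  change ((weightedLaplacian x y).submatrix Fin.succ Fin.succ).det = _
  have hrow (i : Fin (n + 1)) :
      ∑ j : Fin (n + 1), weightedLaplacian x y i.succ j.succ = x 0 * y i.succ i.succ := by
    have := weightedLaplacian_sum_row_eq_zero x y i.succ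
    rw [Fin.sum_univ_succ, weightedLaplacian_apply_of_gt x y (Fin.succ_pos i)] at this
    linear_combination this
  have hlower (i j : Fin (n + 1)) (hji : j < i) :
      weightedLaplacian x y i.succ j.succ = y i.succ i.succ * -x j.succ := by
    rw [weightedLaplacian_apply_of_gt x y (Fin.succ_lt_succ_iff.mpr hji)]
    ring
  rw [det_eq_of_sum_row_eq_of_lower_eq ((weightedLaplacian x y).submatrix Fin.succ Fin.succ)
    (x 0) _ _ hrow hlower, Fin.prod_erase_zero_erase_last]
  simp [sub_neg_eq_add, weightedLaplacian_apply_self_add]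
end

section
/- Single-root-edge generating function: let A = {1,…,n} with n ≥ 2, and consider labelled trees on A rooted at 1 in which vertex 1 has exactly one child, with edge weights as in the weighted Cayley tree setup (edge with child c and parent p contributes x_p·y_{c,c} if c > p and x_c·y_{c,p} if c < p). Then the sum of weights over all such trees equals x_1·y_{n,n}·∏_{i=2}^{n-1} ( y_{i,i}·∑_{j=2}^{i} x_j + x_i·∑_{j=i+1}^{n} y_{i,j} ) — i.e., the full generating polynomial with x_1 replaced by 0 inside the product factors, retaining the leading factor x_1. -/
/-!
Write `⊥` for the root and `⊤` for the largest vertex, and view a tree as its parent map `p`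
(with `p ⊥ = ⊥`). The right-hand side is the total weight of the maps `p` with `p ⊥ = p ⊤ = ⊥`
and `p i ≠ ⊥` otherwise: their parents are chosen independently, and `⊤` contributes
`x ⊥ * y ⊤ ⊤`. Trees whose root child is `⊤` are such maps; the remaining maps contain cycles, and
a Joyal-type bijection matches them with the remaining single-child trees. Cut every cycle right
after its maximum and chain the cycles, in decreasing order of their maxima, into a path from `⊤`
down to `⊥`. The cycle maxima are the right-to-left records of this path, so the construction can
be undone. Only the parents of `⊤` and of the cycle maxima change; all these edges point downwards
before and after, and the new parents are a cyclic shift of the old ones, so the weight, in which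
a downward edge from `i` to `j` contributes `x j * y i i`, is unchanged.
-/

open Finset Function

noncomputable section

namespace Finset

variable {α : Type*} [LinearOrder α] (s : Finset α) {i j : α}

def cycleOn : Equiv.Perm α :=
  (finRotate #s).extendDomain (s.orderIsoOfFin rfl).toEquiv

lemma cycleOn_apply_of_notMem (hi : i ∉ s) : s.cycleOn i = i :=
  Equiv.Perm.extendDomain_apply_not_subtype _ _ hi

lemma cycleOn_symm_apply_of_notMem (hi : i ∉ s) : s.cycleOn.symm i = i :=
  (Equiv.symm_apply_eq _).2 (s.cycleOn_apply_of_notMem hi).symm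

lemma cycleOn_orderIsoOfFin (k : Fin #s) :
    s.cycleOn (s.orderIsoOfFin rfl k) = s.orderIsoOfFin rfl (finRotate #s k) :=
  Equiv.Perm.extendDomain_apply_image _ _ k

lemma cycleOn_apply_mem (hi : i ∈ s) : s.cycleOn i ∈ s := by
  obtain ⟨k, rfl⟩ : ∃ k, (s.orderIsoOfFin rfl k : α) = i :=
    ⟨(s.orderIsoOfFin rfl).symm ⟨i, hi⟩, by simp⟩
  rw [cycleOn_orderIsoOfFin]
  exact Subtype.prop _

lemma cycleOn_symm_apply_mem (hi : i ∈ s) : s.cycleOn.symm i ∈ s := by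
  by_contra h
  have := s.cycleOn_apply_of_notMem h
  rw [Equiv.apply_symm_apply] at this
  exact h (this ▸ hi)

lemma cycleOn_apply_of_lt (hi : i ∈ s) (hj : j ∈ s) (hij : i < j) :
    i < s.cycleOn i ∧ s.cycleOn i ≤ j := by
  set e := s.orderIsoOfFin rfl
  obtain ⟨k, rfl⟩ : ∃ k, (e k : α) = i := ⟨e.symm ⟨i, hi⟩, by simp⟩
  obtain ⟨t, rfl⟩ : ∃ t, (e t : α) = j := ⟨e.symm ⟨j, hj⟩, by simp⟩
  have hkt : k < t := by simpa using hij
  have : NeZero #s := ⟨by have := t.pos; omega⟩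
  have hk : (k : ℕ) + 1 < #s := by omega
  have hrot : ((finRotate #s k : Fin #s) : ℕ) = k + 1 := by
    rw [finRotate_apply, Fin.val_add_one_of_lt' hk]
  rw [cycleOn_orderIsoOfFin]
  constructor
  · exact Subtype.coe_lt_coe.2 (e.lt_iff_lt.2 (Fin.lt_def.2 (by omega)))
  · exact Subtype.coe_le_coe.2 (e.le_iff_le.2 (Fin.le_def.2 (by omega)))

lemma cycleOn_apply_le_of_forall_le (hi : i ∈ s) (hmax : ∀ j ∈ s, j ≤ i) (hj : j ∈ s) :
    s.cycleOn i ≤ j := by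
  set e := s.orderIsoOfFin rfl
  obtain ⟨k, rfl⟩ : ∃ k, (e k : α) = i := ⟨e.symm ⟨i, hi⟩, by simp⟩
  obtain ⟨t, rfl⟩ : ∃ t, (e t : α) = j := ⟨e.symm ⟨j, hj⟩, by simp⟩
  have : NeZero #s := ⟨by have := t.pos; omega⟩
  have hk : (k : ℕ) + 1 = #s := by
    by_contra hne
    have hk : (k : ℕ) + 1 < #s := by omega
    have := hmax (e ⟨k + 1, hk⟩) (Subtype.prop _)
    exact absurd (e.le_iff_le.1 (Subtype.coe_le_coe.1 this)) (by simp [Fin.le_def])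
  have hrot : ((finRotate #s k : Fin #s) : ℕ) = 0 := by
    simp [Fin.val_add, hk]
  rw [cycleOn_orderIsoOfFin]
  exact Subtype.coe_le_coe.2 (e.le_iff_le.2 (Fin.le_def.2 (by omega)))

lemma cycleOn_symm_apply_of_lt (hi : i ∈ s) (hj : j ∈ s) (hji : j < i) :
    s.cycleOn.symm i < i ∧ j ≤ s.cycleOn.symm i := by
  have hk := s.cycleOn_symm_apply_mem hi
  have hρ : s.cycleOn (s.cycleOn.symm i) = i := Equiv.apply_symm_apply _ _
  refine ⟨?_, le_of_not_gt fun hkj => (hρ ▸ (s.cycleOn_apply_of_lt hk hj hkj).2).not_gt hji⟩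
  by_cases hmax : ∀ l ∈ s, l ≤ s.cycleOn.symm i
  · exact absurd (hρ ▸ s.cycleOn_apply_le_of_forall_le hk hmax hj) hji.not_ge
  · push Not at hmax
    obtain ⟨l, hl, hkl⟩ := hmax
    simpa [hρ] using (s.cycleOn_apply_of_lt hk hl hkl).1

lemma le_cycleOn_symm_apply_of_forall_le (hi : i ∈ s) (hmin : ∀ j ∈ s, i ≤ j) (hj : j ∈ s) :
    j ≤ s.cycleOn.symm i := by
  have hk := s.cycleOn_symm_apply_mem hi
  by_contra! hkj
  have := (s.cycleOn_apply_of_lt hk hj hkj).1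
  rw [Equiv.apply_symm_apply] at this
  exact this.not_ge (hmin _ hk)

end Finset

namespace CayleyTree

variable {α : Type*}

section Iteration

variable {f : α → α} {a b c z : α}

def Reaches (f : α → α) (a b : α) : Prop := ∃ k, f^[k] a = b

namespace Reaches

@[refl]
lemma refl (f : α → α) (a : α) : Reaches f a a := ⟨0, rfl⟩

lemma iterate (f : α → α) (a : α) (k : ℕ) : Reaches f a (f^[k] a) := ⟨k, rfl⟩

lemma trans (hab : Reaches f a b) (hbc : Reaches f b c) : Reaches f a c := by
  obtain ⟨k, rfl⟩ := hab
  obtain ⟨l, rfl⟩ := hbc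
  exact ⟨l + k, iterate_add_apply f l k a⟩

lemma of_apply (h : Reaches f (f a) b) : Reaches f a b := (iterate f a 1).trans h

lemma eq_of_isFixedPt (hz : IsFixedPt f z) (h : Reaches f z a) : a = z := by
  obtain ⟨k, rfl⟩ := h
  exact hz.iterate k

lemma mem_periodicPts (ha : a ∈ periodicPts f) (h : Reaches f a b) : b ∈ periodicPts f := by
  obtain ⟨k, rfl⟩ := h
  obtain ⟨n, hn, hper⟩ := Function.mem_periodicPts.1 ha
  exact mk_mem_periodicPts hn (hper.apply_iterate k)

lemma symm_of_mem_periodicPts (ha : a ∈ periodicPts f) (h : Reaches f a b) : Reaches f b a := by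
  obtain ⟨k, rfl⟩ := h
  obtain ⟨n, hn, hper⟩ := Function.mem_periodicPts.1 ha
  refine ⟨n * k - k, ?_⟩
  rw [← iterate_add_apply, Nat.sub_add_cancel (Nat.le_mul_of_pos_left k hn)]
  exact hper.mul_const k

end Reaches

lemma exists_iterate_mem_periodicPts [Finite α] (f : α → α) (a : α) :
    ∃ k, f^[k] a ∈ periodicPts f := by
  obtain ⟨i, j, hne, hij⟩ := Finite.exists_ne_map_eq_of_infinite fun k : ℕ => f^[k] a
  wlog hlt : i < j generalizing i j
  · exact this j i hne.symm hij.symm (by omega)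
  refine ⟨i, mk_mem_periodicPts (Nat.sub_pos_of_lt hlt) ?_⟩
  change f^[j - i] (f^[i] a) = f^[i] a
  rw [← iterate_add_apply, Nat.sub_add_cancel hlt.le, hij]

variable [LinearOrder α]

lemma Reaches.eq_of_orbit_le (hab : Reaches f a b) (hm : a ∈ periodicPts f)
    (ha : ∀ w, Reaches f a w → w ≤ a) (hb : ∀ w, Reaches f b w → w ≤ b) : b = a :=
  le_antisymm (ha b hab) (hb a (hab.symm_of_mem_periodicPts hm))

lemma exists_reaches_forall_reaches_le [Fintype α] (f : α → α) (a : α) :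
    ∃ m, Reaches f a m ∧ ∀ w, Reaches f m w → w ≤ m := by
  classical
  have hne : ({w | Reaches f a w} : Finset α).Nonempty := ⟨a, by simp [Reaches.refl]⟩
  obtain ⟨-, hmax⟩ := mem_filter.1 (max'_mem _ hne)
  refine ⟨_, hmax, fun w hw => le_max' _ _ ?_⟩
  simpa using hmax.trans hw

end Iteration

section Spine

variable [LinearOrder α] [BoundedOrder α]

structure IsTreeSide (g : α → α) : Prop where
  map_bot : g ⊥ = ⊥
  reaches_bot : ∀ v, Reaches g v ⊥
  child_unique : ∀ i j, i ≠ ⊥ → g i = ⊥ → j ≠ ⊥ → g j = ⊥ → i = j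
  map_top_ne_bot : g ⊤ ≠ ⊥

def spineLength (g : α → α) : ℕ := sInf {k | g^[k] ⊤ = ⊥}

namespace IsTreeSide

variable {g : α → α} {v : α} {a b : ℕ}

lemma eq_bot_of_mem_periodicPts (G : IsTreeSide g) (hv : v ∈ periodicPts g) : v = ⊥ :=
  ((G.reaches_bot v).symm_of_mem_periodicPts hv).eq_of_isFixedPt G.map_bot

lemma top_ne_bot (G : IsTreeSide g) : (⊤ : α) ≠ ⊥ := fun h => G.map_top_ne_bot (h ▸ G.map_bot)

lemma iterate_top_eq_bot_iff (G : IsTreeSide g) : g^[a] ⊤ = ⊥ ↔ spineLength g ≤ a := by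
  refine ⟨fun h => Nat.sInf_le h, fun h => ?_⟩
  have hL : g^[spineLength g] ⊤ = ⊥ := Nat.sInf_mem (G.reaches_bot ⊤)
  rw [← Nat.sub_add_cancel h, iterate_add_apply, hL, iterate_fixed G.map_bot]

lemma iterate_top_ne_bot (G : IsTreeSide g) (ha : a < spineLength g) : g^[a] ⊤ ≠ ⊥ :=
  fun h => ha.not_ge (G.iterate_top_eq_bot_iff.1 h)

lemma iterate_top_injOn (G : IsTreeSide g) (ha : a < spineLength g) (hb : b < spineLength g)
    (hab : g^[a] ⊤ = g^[b] ⊤) : a = b := by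
  wlog hlt : a < b generalizing a b
  · rcases (not_lt.1 hlt).eq_or_lt with h | h
    · exact h.symm
    · exact (this hb ha hab.symm h).symm
  refine absurd (G.eq_bot_of_mem_periodicPts (mk_mem_periodicPts (Nat.sub_pos_of_lt hlt) ?_))
    (G.iterate_top_ne_bot ha)
  change g^[b - a] (g^[a] ⊤) = g^[a] ⊤
  rw [← iterate_add_apply, Nat.sub_add_cancel hlt.le, hab]

lemma one_lt_spineLength (G : IsTreeSide g) : 1 < spineLength g := by
  by_contra! h
  interval_cases hL : spineLength g
  · exact G.top_ne_bot (G.iterate_top_eq_bot_iff.2 hL.le)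
  · exact G.map_top_ne_bot (G.iterate_top_eq_bot_iff.2 hL.le)

lemma apply_rootChild (G : IsTreeSide g) : g (g^[spineLength g - 1] ⊤) = ⊥ := by
  rw [← iterate_succ_apply' g, Nat.succ_eq_add_one,
    Nat.sub_add_cancel (zero_lt_one.trans G.one_lt_spineLength)]
  exact G.iterate_top_eq_bot_iff.2 le_rfl

end IsTreeSide

end Spine

section Weights

variable [LinearOrder α] {R : Type*} (x : α → R) (y : α → α → R)

def edgeWeight [Mul R] (i j : α) : R := if j < i then x j * y i i else x i * y i j

def treeWeight [CommMonoid R] [Fintype α] [OrderBot α] (p : α → α) : R :=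
  ∏ i ∈ univ.erase ⊥, edgeWeight x y i (p i)

variable {x y} [Mul R]

lemma edgeWeight_of_le {i j : α} (h : j ≤ i) : edgeWeight x y i j = x j * y i i := by
  rcases h.lt_or_eq with h | rfl
  · exact if_pos h
  · exact if_neg (lt_irrefl j)

lemma edgeWeight_of_lt {i j : α} (h : i < j) : edgeWeight x y i j = x i * y i j :=
  if_neg h.not_gt

end Weights

section Bijection

variable [Fintype α] [LinearOrder α] [BoundedOrder α]

open scoped Classical in
def cycleMaxima (f : α → α) : Finset α :=
  {v | v ≠ ⊥ ∧ v ∈ periodicPts f ∧ ∀ w, Reaches f v w → w ≤ v}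

open scoped Classical in
def spineRecords (g : α → α) : Finset α :=
  {v | v ≠ ⊥ ∧ (∃ k, 0 < k ∧ g^[k] ⊤ = v) ∧ ∀ w, Reaches g v w → w = ⊥ ∨ w ≤ v}

def linkCycles (f : α → α) : α → α := f ∘ (insert ⊤ (cycleMaxima f)).cycleOn.symm

def cutSpine (g : α → α) : α → α := g ∘ (insert ⊤ (spineRecords g)).cycleOn

lemma mem_cycleMaxima {f : α → α} {v : α} :
    v ∈ cycleMaxima f ↔ v ≠ ⊥ ∧ v ∈ periodicPts f ∧ ∀ w, Reaches f v w → w ≤ v := by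
  simp [cycleMaxima]

lemma mem_spineRecords {g : α → α} {v : α} : v ∈ spineRecords g ↔
    v ≠ ⊥ ∧ (∃ k, 0 < k ∧ g^[k] ⊤ = v) ∧ ∀ w, Reaches g v w → w = ⊥ ∨ w ≤ v := by
  simp [spineRecords]

structure IsCycleSide (f : α → α) : Prop where
  map_bot : f ⊥ = ⊥
  map_top : f ⊤ = ⊥
  map_ne_bot : ∀ i, i ≠ ⊥ → i ≠ ⊤ → f i ≠ ⊥
  nonempty : (cycleMaxima f).Nonempty

def cyclesUpTo (f : α → α) (b : α) : Set α :=
  {w | w = ⊥ ∨ ∃ m ∈ cycleMaxima f, m ≤ b ∧ Reaches f m w}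

lemma linkCycles_apply_of_notMem {f : α → α} {i : α} (hi : i ≠ ⊤) (hM : i ∉ cycleMaxima f) :
    linkCycles f i = f i := by
  rw [linkCycles, comp_apply, cycleOn_symm_apply_of_notMem]
  simp [hi, hM]

lemma apply_le_of_mem_cycleMaxima {f : α → α} {m : α} (hm : m ∈ cycleMaxima f) : f m ≤ m :=
  (mem_cycleMaxima.1 hm).2.2 _ ⟨1, rfl⟩

lemma exists_mem_cycleMaxima_reaches {f : α → α} {v : α} (hbot : f ⊥ = ⊥)
    (hv : v ∈ periodicPts f) (hne : v ≠ ⊥) : ∃ m ∈ cycleMaxima f, Reaches f m v := by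
  obtain ⟨m, hvm, hmax⟩ := exists_reaches_forall_reaches_le f v
  refine ⟨m, mem_cycleMaxima.2 ⟨?_, hvm.mem_periodicPts hv, hmax⟩, hvm.symm_of_mem_periodicPts hv⟩
  rintro rfl
  exact hne ((hvm.symm_of_mem_periodicPts hv).eq_of_isFixedPt hbot)

lemma eq_bot_or_le_of_mem_cyclesUpTo {f : α → α} {b w : α} (hw : w ∈ cyclesUpTo f b) :
    w = ⊥ ∨ w ≤ b :=
  hw.imp_right fun ⟨_, hm, hmb, h⟩ => ((mem_cycleMaxima.1 hm).2.2 w h).trans hmb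

namespace IsCycleSide

variable {f : α → α} {i m m' v : α}

lemma top_ne_bot (H : IsCycleSide f) : (⊤ : α) ≠ ⊥ := by
  intro h
  obtain ⟨m, hm⟩ := H.nonempty
  exact (mem_cycleMaxima.1 hm).1 (le_bot_iff.1 (h ▸ le_top))

lemma top_notMem_periodicPts (H : IsCycleSide f) : ⊤ ∉ periodicPts f := fun h =>
  H.top_ne_bot <| (Reaches.symm_of_mem_periodicPts h ⟨1, H.map_top⟩).eq_of_isFixedPt H.map_bot

lemma lt_top_of_mem (H : IsCycleSide f) (hm : m ∈ cycleMaxima f) : m < ⊤ :=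
  lt_top_iff_ne_top.2 fun h => H.top_notMem_periodicPts (h ▸ (mem_cycleMaxima.1 hm).2.1)

lemma apply_ne_bot_of_mem (H : IsCycleSide f) (hm : m ∈ cycleMaxima f) : f m ≠ ⊥ :=
  H.map_ne_bot m (mem_cycleMaxima.1 hm).1 (H.lt_top_of_mem hm).ne

lemma linkCycles_bot (H : IsCycleSide f) : linkCycles f ⊥ = ⊥ := by
  rw [linkCycles_apply_of_notMem H.top_ne_bot.symm fun h => (mem_cycleMaxima.1 h).1 rfl,
    H.map_bot]

lemma linkCycles_top (H : IsCycleSide f) : ∃ m ∈ cycleMaxima f,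
    (∀ u ∈ cycleMaxima f, u ≤ m) ∧ linkCycles f ⊤ = f m := by
  set S := insert ⊤ (cycleMaxima f)
  have hlt : ∀ u ∈ cycleMaxima f, S.cycleOn.symm ⊤ < ⊤ ∧ u ≤ S.cycleOn.symm ⊤ := fun u hu =>
    S.cycleOn_symm_apply_of_lt (mem_insert_self _ _) (mem_insert_of_mem hu) (H.lt_top_of_mem hu)
  obtain ⟨m₀, hm₀⟩ := H.nonempty
  have hmem := (mem_insert.1 (S.cycleOn_symm_apply_mem (mem_insert_self ⊤ _))).resolve_left
    (hlt m₀ hm₀).1.ne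
  exact ⟨_, hmem, fun u hu => (hlt u hu).2, rfl⟩

lemma linkCycles_of_mem (H : IsCycleSide f) (hm : m ∈ cycleMaxima f) :
    (∀ u ∈ cycleMaxima f, m ≤ u) ∧ linkCycles f m = ⊥ ∨
      ∃ m' ∈ cycleMaxima f, m' < m ∧ (∀ u ∈ cycleMaxima f, u < m → u ≤ m') ∧
        linkCycles f m = f m' := by
  set S := insert ⊤ (cycleMaxima f)
  have hmS : m ∈ S := mem_insert_of_mem hm
  by_cases hmin : ∀ u ∈ cycleMaxima f, m ≤ u
  · have hminS : ∀ j ∈ S, m ≤ j := by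
      simpa only [S, forall_mem_insert] using ⟨le_top, hmin⟩
    have htop : S.cycleOn.symm m = ⊤ :=
      top_le_iff.1 (S.le_cycleOn_symm_apply_of_forall_le hmS hminS (mem_insert_self _ _))
    exact Or.inl ⟨hmin, by rw [linkCycles, comp_apply, htop, H.map_top]⟩
  · push Not at hmin
    obtain ⟨u, hu, hum⟩ := hmin
    have hlt := (S.cycleOn_symm_apply_of_lt hmS (mem_insert_of_mem hu) hum).1
    have hmem := (mem_insert.1 (S.cycleOn_symm_apply_mem hmS)).resolve_left
      (hlt.trans (H.lt_top_of_mem hm)).ne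
    exact Or.inr ⟨_, hmem, hlt,
      fun u' hu' h => (S.cycleOn_symm_apply_of_lt hmS (mem_insert_of_mem hu') h).2, rfl⟩

lemma mapsTo_linkCycles (H : IsCycleSide f) (b : α) :
    Set.MapsTo (linkCycles f) (cyclesUpTo f b) (cyclesUpTo f b) := by
  rintro w (rfl | ⟨m, hm, hmb, hw⟩)
  · exact Or.inl H.linkCycles_bot
  obtain ⟨-, hper, hmax⟩ := mem_cycleMaxima.1 hm
  by_cases hwM : w ∈ cycleMaxima f
  · obtain rfl : w = m := hw.eq_of_orbit_le hper hmax (mem_cycleMaxima.1 hwM).2.2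
    rcases H.linkCycles_of_mem hm with ⟨-, h⟩ | ⟨m', hm', hlt, -, h⟩
    · exact Or.inl h
    · exact Or.inr ⟨m', hm', hlt.le.trans hmb, h ▸ Reaches.iterate f m' 1⟩
  · have hwtop : w ≠ ⊤ := fun h => H.top_notMem_periodicPts (h ▸ hw.mem_periodicPts hper)
    rw [linkCycles_apply_of_notMem hwtop hwM]
    exact Or.inr ⟨m, hm, hmb, hw.trans (Reaches.iterate f w 1)⟩

lemma reaches_linkCycles_of_reaches (H : IsCycleSide f) (hm : m ∈ cycleMaxima f)
    (hv : Reaches f m v) : Reaches (linkCycles f) v m := by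
  obtain ⟨-, hper, hmax⟩ := mem_cycleMaxima.1 hm
  obtain ⟨d, hd⟩ := hv.symm_of_mem_periodicPts hper
  induction d generalizing v with
  | zero => exact hd ▸ Reaches.refl _ _
  | succ d ih =>
    by_cases hvm : v = m
    · exact hvm ▸ Reaches.refl _ _
    have hvM : v ∉ cycleMaxima f := fun h =>
      hvm (hv.eq_of_orbit_le hper hmax (mem_cycleMaxima.1 h).2.2)
    have hvtop : v ≠ ⊤ := fun h => H.top_notMem_periodicPts (h ▸ hv.mem_periodicPts hper)
    refine Reaches.of_apply ?_
    rw [linkCycles_apply_of_notMem hvtop hvM]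
    exact ih (hv.trans (Reaches.iterate f v 1)) hd

lemma reaches_linkCycles_of_le (H : IsCycleSide f) (hm : m ∈ cycleMaxima f)
    (hm' : m' ∈ cycleMaxima f) (hle : m ≤ m') : Reaches (linkCycles f) m' m := by
  induction m' using WellFoundedLT.induction with
  | _ m' ih =>
  rcases hle.eq_or_lt with rfl | hlt
  · rfl
  rcases H.linkCycles_of_mem hm' with ⟨hmin, -⟩ | ⟨m'', hm'', hlt'', hbelow, h⟩
  · exact absurd (hmin m hm) hlt.not_ge
  · refine Reaches.of_apply (h ▸ ?_)
    exact (H.reaches_linkCycles_of_reaches hm'' (Reaches.iterate f m'' 1)).trans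
      (ih m'' hlt'' hm'' (hbelow m hm hlt))

lemma reaches_bot_of_mem (H : IsCycleSide f) (hm : m ∈ cycleMaxima f) :
    Reaches (linkCycles f) m ⊥ := by
  have hm₀ := min'_mem _ H.nonempty
  refine (H.reaches_linkCycles_of_le hm₀ hm (min'_le _ _ hm)).trans ?_
  rcases H.linkCycles_of_mem hm₀ with ⟨-, h⟩ | ⟨m', hm', hlt, -, -⟩
  · exact ⟨1, h⟩
  · exact absurd (min'_le _ _ hm') hlt.not_ge

lemma exists_iterate_top_eq (H : IsCycleSide f) (hm : m ∈ cycleMaxima f) :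
    ∃ k, 0 < k ∧ (linkCycles f)^[k] ⊤ = m := by
  obtain ⟨M, hM, hmax, htop⟩ := H.linkCycles_top
  obtain ⟨k, hk⟩ := (H.reaches_linkCycles_of_reaches hM (Reaches.iterate f M 1)).trans
    (H.reaches_linkCycles_of_le hm hM (hmax m hm))
  exact ⟨k + 1, k.succ_pos, by rwa [iterate_succ_apply, htop]⟩

lemma spineRecords_linkCycles (H : IsCycleSide f) :
    spineRecords (linkCycles f) = cycleMaxima f := by
  ext v
  rw [mem_spineRecords]
  constructor
  · rintro ⟨hv, ⟨k, hk, rfl⟩, hbound⟩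
    obtain ⟨M, hM, -, htop⟩ := H.linkCycles_top
    obtain ⟨k, rfl⟩ : ∃ j, k = j + 1 := ⟨k - 1, by omega⟩
    have hmem : (linkCycles f)^[k + 1] ⊤ ∈ cyclesUpTo f ⊤ := by
      rw [iterate_succ_apply, htop]
      exact (H.mapsTo_linkCycles ⊤).iterate _ (Or.inr ⟨M, hM, le_top, Reaches.iterate f M 1⟩)
    obtain ⟨m, hm, -, hmv⟩ := hmem.resolve_left (by simpa using hv)
    obtain ⟨hm0, -, hmax⟩ := mem_cycleMaxima.1 hm
    have hvm := (hbound m (H.reaches_linkCycles_of_reaches hm hmv)).resolve_left hm0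
    rwa [le_antisymm (hmax _ hmv) hvm]
  · intro hv
    refine ⟨(mem_cycleMaxima.1 hv).1, H.exists_iterate_top_eq hv, ?_⟩
    rintro w ⟨k, rfl⟩
    exact eq_bot_or_le_of_mem_cyclesUpTo
      ((H.mapsTo_linkCycles v).iterate k (Or.inr ⟨v, hv, le_rfl, Reaches.refl f v⟩))

lemma reaches_bot_of_mem_periodicPts (H : IsCycleSide f) (hv : v ∈ periodicPts f) :
    Reaches (linkCycles f) v ⊥ := by
  rcases eq_or_ne v ⊥ with rfl | hne
  · rfl
  obtain ⟨m, hm, hmv⟩ := exists_mem_cycleMaxima_reaches H.map_bot hv hne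
  exact (H.reaches_linkCycles_of_reaches hm hmv).trans (H.reaches_bot_of_mem hm)

lemma linkCycles_reaches_bot (H : IsCycleSide f) (v : α) : Reaches (linkCycles f) v ⊥ := by
  obtain ⟨k, hk⟩ := exists_iterate_mem_periodicPts f v
  induction k generalizing v with
  | zero => exact H.reaches_bot_of_mem_periodicPts hk
  | succ k ih =>
    by_cases htop : v = ⊤
    · obtain ⟨M, hM, -, h⟩ := H.linkCycles_top
      refine htop ▸ Reaches.of_apply (h ▸ ?_)
      exact (H.reaches_linkCycles_of_reaches hM (Reaches.iterate f M 1)).trans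
        (H.reaches_bot_of_mem hM)
    by_cases hM : v ∈ cycleMaxima f
    · exact H.reaches_bot_of_mem hM
    · exact Reaches.of_apply (by rw [linkCycles_apply_of_notMem htop hM]; exact ih _ hk)

lemma linkCycles_eq_bot_iff (H : IsCycleSide f) (hi : i ≠ ⊥) :
    linkCycles f i = ⊥ ↔ i = (cycleMaxima f).min' H.nonempty := by
  have hm₀ := min'_mem _ H.nonempty
  constructor
  · intro h
    by_cases htop : i = ⊤
    · obtain ⟨M, hM, -, htopM⟩ := H.linkCycles_top
      rw [htop, htopM] at h
      exact absurd h (H.apply_ne_bot_of_mem hM)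
    by_cases hM : i ∈ cycleMaxima f
    · rcases H.linkCycles_of_mem hM with ⟨hmin, -⟩ | ⟨m', hm', -, -, h'⟩
      · exact le_antisymm (hmin _ hm₀) (min'_le _ _ hM)
      · exact absurd (h' ▸ h) (H.apply_ne_bot_of_mem hm')
    · exact absurd (linkCycles_apply_of_notMem htop hM ▸ h) (H.map_ne_bot i hi htop)
  · rintro rfl
    rcases H.linkCycles_of_mem hm₀ with ⟨-, h⟩ | ⟨m', hm', hlt, -, -⟩
    · exact h
    · exact absurd (min'_le _ _ hm') hlt.not_ge

lemma card_linkCycles_eq_bot (H : IsCycleSide f) :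
    #{i | i ≠ ⊥ ∧ linkCycles f i = ⊥} = 1 := by
  refine card_eq_one.2 ⟨(cycleMaxima f).min' H.nonempty,
    eq_singleton_iff_unique_mem.2 ⟨?_, fun i hi => ?_⟩⟩
  · have hm₀ := min'_mem _ H.nonempty
    exact mem_filter.2 ⟨mem_univ _, (mem_cycleMaxima.1 hm₀).1,
      (H.linkCycles_eq_bot_iff (mem_cycleMaxima.1 hm₀).1).2 rfl⟩
  · obtain ⟨-, hi, h⟩ := mem_filter.1 hi
    exact (H.linkCycles_eq_bot_iff hi).1 h

lemma linkCycles_top_ne_bot (H : IsCycleSide f) : linkCycles f ⊤ ≠ ⊥ := by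
  obtain ⟨M, hM, -, h⟩ := H.linkCycles_top
  exact h ▸ H.apply_ne_bot_of_mem hM

lemma cutSpine_linkCycles (H : IsCycleSide f) : cutSpine (linkCycles f) = f := by
  rw [cutSpine, H.spineRecords_linkCycles]
  ext i
  simp [linkCycles]

lemma treeWeight_linkCycles {R : Type*} [CommMonoid R] {x : α → R} {y : α → α → R}
    (H : IsCycleSide f) :
    treeWeight x y (linkCycles f) = treeWeight x y f := by
  set S := insert ⊤ (cycleMaxima f)
  have hS : S ⊆ univ.erase ⊥ := insert_subset (mem_erase.2 ⟨H.top_ne_bot, mem_univ _⟩)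
    fun m hm => mem_erase.2 ⟨(mem_cycleMaxima.1 hm).1, mem_univ _⟩
  have hdesc : ∀ i ∈ S, linkCycles f i ≤ i ∧ f i ≤ i := by
    intro i hi
    rcases mem_insert.1 hi with rfl | hm
    · exact ⟨le_top, le_top⟩
    refine ⟨?_, apply_le_of_mem_cycleMaxima hm⟩
    rcases H.linkCycles_of_mem hm with ⟨-, h⟩ | ⟨m', hm', hlt, -, h⟩
    · exact h ▸ bot_le
    · exact h ▸ (apply_le_of_mem_cycleMaxima hm').trans hlt.le
  have hsupp : {i | S.cycleOn.symm i ≠ i} ⊆ S := fun i hi => by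
    by_contra h
    exact hi (cycleOn_symm_apply_of_notMem _ h)
  rw [treeWeight, treeWeight, ← prod_sdiff hS, ← prod_sdiff hS]
  congr 1
  · refine prod_congr rfl fun i hi => ?_
    obtain ⟨-, hiS⟩ := mem_sdiff.1 hi
    rw [linkCycles_apply_of_notMem (ne_of_mem_of_not_mem (mem_insert_self _ _) hiS).symm
      (fun h => hiS (mem_insert_of_mem h))]
  · calc ∏ i ∈ S, edgeWeight x y i (linkCycles f i)
        = (∏ i ∈ S, x (f (S.cycleOn.symm i))) * ∏ i ∈ S, y i i := by
          rw [← prod_mul_distrib]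
          exact prod_congr rfl fun i hi => edgeWeight_of_le (hdesc i hi).1
      _ = (∏ i ∈ S, x (f i)) * ∏ i ∈ S, y i i := by
          rw [Equiv.Perm.prod_comp S.cycleOn.symm S (fun i => x (f i)) hsupp]
      _ = ∏ i ∈ S, edgeWeight x y i (f i) := by
          rw [← prod_mul_distrib]
          exact prod_congr rfl fun i hi => (edgeWeight_of_le (hdesc i hi).2).symm

end IsCycleSide

lemma cutSpine_apply_of_notMem {g : α → α} {i : α} (hi : i ≠ ⊤) (hR : i ∉ spineRecords g) :
    cutSpine g i = g i := by
  rw [cutSpine, comp_apply, cycleOn_apply_of_notMem]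
  simp [hi, hR]

namespace IsTreeSide

variable {g : α → α} {m u v : α} {a b p q : ℕ}

lemma exists_index_of_mem_spineRecords (G : IsTreeSide g) (hv : v ∈ spineRecords g) :
    ∃ a, 0 < a ∧ a < spineLength g ∧ g^[a] ⊤ = v := by
  obtain ⟨hv0, ⟨a, ha, rfl⟩, -⟩ := mem_spineRecords.1 hv
  exact ⟨a, ha, not_le.1 fun h => hv0 (G.iterate_top_eq_bot_iff.2 h), rfl⟩

lemma lt_top_of_mem_spineRecords (G : IsTreeSide g) (hv : v ∈ spineRecords g) : v < ⊤ := by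
  obtain ⟨a, ha, haL, rfl⟩ := G.exists_index_of_mem_spineRecords hv
  exact lt_top_iff_ne_top.2 fun h =>
    ha.ne' (G.iterate_top_injOn haL (zero_lt_one.trans G.one_lt_spineLength) h)

lemma exists_index_of_mem (G : IsTreeSide g) (hv : v ∈ insert ⊤ (spineRecords g)) :
    ∃ a < spineLength g, g^[a] ⊤ = v := by
  rcases mem_insert.1 hv with rfl | hv
  · exact ⟨0, zero_lt_one.trans G.one_lt_spineLength, rfl⟩
  · obtain ⟨a, -, haL, rfl⟩ := G.exists_index_of_mem_spineRecords hv
    exact ⟨a, haL, rfl⟩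

lemma iterate_top_lt (G : IsTreeSide g) (ha : g^[a] ⊤ ∈ insert ⊤ (spineRecords g))
    (hab : a < b) (hb : b < spineLength g) : g^[b] ⊤ < g^[a] ⊤ := by
  have hne : g^[b] ⊤ ≠ g^[a] ⊤ := fun h => hab.ne' (G.iterate_top_injOn hb (hab.trans hb) h)
  refine lt_of_le_of_ne ?_ hne
  rcases mem_insert.1 ha with h | h
  · rw [h]
    exact le_top
  · refine ((mem_spineRecords.1 h).2.2 _ ⟨b - a, ?_⟩).resolve_left (G.iterate_top_ne_bot hb)
    rw [← iterate_add_apply, Nat.sub_add_cancel hab.le]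

lemma exists_record_ge (G : IsTreeSide g) (ha : 0 < a) (haL : a < spineLength g) :
    ∃ b, a ≤ b ∧ b < spineLength g ∧ g^[b] ⊤ ∈ spineRecords g ∧ g^[a] ⊤ ≤ g^[b] ⊤ := by
  set U := (Ico a (spineLength g)).image fun k => g^[k] ⊤
  have hU : U.Nonempty := ⟨_, mem_image_of_mem _ (mem_Ico.2 ⟨le_rfl, haL⟩)⟩
  have hle : ∀ k, a ≤ k → k < spineLength g → g^[k] ⊤ ≤ U.max' hU := fun k hk hkL =>
    le_max' U _ (mem_image_of_mem (fun k => g^[k] ⊤) (mem_Ico.2 ⟨hk, hkL⟩))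
  obtain ⟨b, hb, hbmax⟩ := mem_image.1 (max'_mem U hU)
  obtain ⟨hab, hbL⟩ := mem_Ico.1 hb
  refine ⟨b, hab, hbL, mem_spineRecords.2 ⟨G.iterate_top_ne_bot hbL, ⟨b, ha.trans_le hab, rfl⟩,
    ?_⟩, hbmax ▸ hle a le_rfl haL⟩
  rintro w ⟨t, rfl⟩
  rw [← iterate_add_apply]
  rcases lt_or_ge (t + b) (spineLength g) with h | h
  · exact Or.inr (hbmax ▸ hle _ (hab.trans (Nat.le_add_left b t)) h)
  · exact Or.inl (G.iterate_top_eq_bot_iff.2 h)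

lemma rootChild_mem (G : IsTreeSide g) : g^[spineLength g - 1] ⊤ ∈ spineRecords g := by
  have hL := G.one_lt_spineLength
  refine mem_spineRecords.2 ⟨G.iterate_top_ne_bot (by omega), ⟨_, by omega, rfl⟩, ?_⟩
  rintro w ⟨t, rfl⟩
  rw [← iterate_add_apply]
  rcases t with _ | t
  · exact Or.inr (by rw [zero_add])
  · exact Or.inl (G.iterate_top_eq_bot_iff.2 (by omega))

lemma rootChild_le (G : IsTreeSide g) (hu : u ∈ spineRecords g) :
    g^[spineLength g - 1] ⊤ ≤ u := by
  obtain ⟨a, -, haL, rfl⟩ := G.exists_index_of_mem_spineRecords hu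
  refine ((mem_spineRecords.1 hu).2.2 _ ⟨spineLength g - 1 - a, ?_⟩).resolve_left
    (G.iterate_top_ne_bot (by omega))
  rw [← iterate_add_apply, Nat.sub_add_cancel (by omega)]

lemma cycleOn_top (G : IsTreeSide g) :
    (insert ⊤ (spineRecords g)).cycleOn ⊤ = g^[spineLength g - 1] ⊤ := by
  set S := insert ⊤ (spineRecords g)
  have hc := G.rootChild_mem
  have hle := S.cycleOn_apply_le_of_forall_le (mem_insert_self _ _) (fun _ _ => le_top)
    (mem_insert_of_mem hc)
  rcases mem_insert.1 (S.cycleOn_apply_mem (mem_insert_self ⊤ _)) with h | h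
  · rw [h] at hle
    exact absurd hle (G.lt_top_of_mem_spineRecords hc).not_ge
  · exact le_antisymm hle (G.rootChild_le h)

lemma cutSpine_top (G : IsTreeSide g) : cutSpine g ⊤ = ⊥ := by
  rw [cutSpine, comp_apply, G.cycleOn_top, G.apply_rootChild]

lemma bot_notMem (G : IsTreeSide g) : ⊥ ∉ insert ⊤ (spineRecords g) := by
  simp [G.top_ne_bot.symm, mem_spineRecords]

lemma cutSpine_bot (G : IsTreeSide g) : cutSpine g ⊥ = ⊥ := by
  rw [cutSpine, comp_apply, cycleOn_apply_of_notMem _ G.bot_notMem, G.map_bot]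

lemma top_notMem_periodicPts_cutSpine (G : IsTreeSide g) : ⊤ ∉ periodicPts (cutSpine g) :=
  fun h => G.top_ne_bot <|
    (Reaches.symm_of_mem_periodicPts h ⟨1, G.cutSpine_top⟩).eq_of_isFixedPt G.cutSpine_bot

-- The cycle cut out around the record `g^[p] ⊤` is the stretch of the spine after position `q`.
lemma exists_block (G : IsTreeSide g) (hm : g^[p] ⊤ ∈ spineRecords g) : ∃ q < p,
    g^[q] ⊤ = (insert ⊤ (spineRecords g)).cycleOn (g^[p] ⊤) ∧
      ∀ j, q < j → j < spineLength g → g^[j] ⊤ ≤ g^[p] ⊤ := by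
  set S := insert ⊤ (spineRecords g)
  have hmS : g^[p] ⊤ ∈ S := mem_insert_of_mem hm
  have hnext : ∀ u ∈ S, g^[p] ⊤ < u → g^[p] ⊤ < S.cycleOn (g^[p] ⊤) ∧ S.cycleOn (g^[p] ⊤) ≤ u :=
    fun u hu => S.cycleOn_apply_of_lt hmS hu
  have hlt := (hnext ⊤ (mem_insert_self _ _) (G.lt_top_of_mem_spineRecords hm)).1
  obtain ⟨q, hqL, hq⟩ := G.exists_index_of_mem (S.cycleOn_apply_mem hmS)
  refine ⟨q, ?_, hq, fun j hqj hjL => ?_⟩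
  · by_contra! hpq
    rcases hpq.eq_or_lt with rfl | hpq
    · exact hlt.ne hq
    · exact (hq ▸ G.iterate_top_lt hmS hpq hqL).not_gt hlt
  · obtain ⟨b, hjb, hbL, hb, hle⟩ := G.exists_record_ge (by omega) hjL
    refine hle.trans (le_of_not_gt fun hmb => ?_)
    exact (G.iterate_top_lt (hq ▸ S.cycleOn_apply_mem hmS) (hqj.trans_le hjb) hbL).not_ge
      (hq ▸ (hnext _ (mem_insert_of_mem hb) hmb).2)

lemma cutSpine_iterate_of_block (G : IsTreeSide g) (hpL : p < spineLength g) (hqp : q < p)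
    (hq : g^[q] ⊤ = (insert ⊤ (spineRecords g)).cycleOn (g^[p] ⊤))
    (hblock : ∀ j, q < j → j < spineLength g → g^[j] ⊤ ≤ g^[p] ⊤) {t : ℕ} (ht : 0 < t)
    (htp : t ≤ p - q) : (cutSpine g)^[t] (g^[p] ⊤) = g^[q + t] ⊤ := by
  induction t with
  | zero => omega
  | succ t ih =>
    rcases Nat.eq_zero_or_pos t with rfl | ht0
    · rw [iterate_one, cutSpine, comp_apply, ← hq, ← iterate_succ_apply' g]
    rw [iterate_succ_apply', ih ht0 (by omega)]
    have hnot : g^[q + t] ⊤ ∉ insert ⊤ (spineRecords g) := fun h =>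
      (G.iterate_top_lt h (show q + t < p by omega) hpL).not_ge (hblock _ (by omega) (by omega))
    rw [cutSpine_apply_of_notMem (ne_of_mem_of_not_mem (mem_insert_self _ _) hnot).symm
      (fun h => hnot (mem_insert_of_mem h)), ← iterate_succ_apply' g]
    rfl

lemma mem_cycleMaxima_cutSpine (G : IsTreeSide g) (hm : m ∈ spineRecords g) :
    m ∈ cycleMaxima (cutSpine g) := by
  obtain ⟨p, -, hpL, rfl⟩ := G.exists_index_of_mem_spineRecords hm
  obtain ⟨q, hqp, hq, hblock⟩ := G.exists_block hm
  have hwalk {t} := G.cutSpine_iterate_of_block hpL hqp hq hblock (t := t)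
  have hper : IsPeriodicPt (cutSpine g) (p - q) (g^[p] ⊤) := by
    change _ = _
    rw [hwalk (by omega) le_rfl, Nat.add_sub_cancel' hqp.le]
  refine mem_cycleMaxima.2 ⟨(mem_spineRecords.1 hm).1, mk_mem_periodicPts (by omega) hper, ?_⟩
  rintro w ⟨t, rfl⟩
  rw [← hper.iterate_mod_apply]
  rcases Nat.eq_zero_or_pos (t % (p - q)) with h | h
  · rw [h, iterate_zero_apply]
  · have hlt := Nat.mod_lt t (Nat.sub_pos_of_lt hqp)
    rw [hwalk h hlt.le]
    exact hblock _ (by omega) (by omega)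

lemma mem_spineRecords_of_mem_cycleMaxima (G : IsTreeSide g)
    (hv : v ∈ cycleMaxima (cutSpine g)) : v ∈ spineRecords g := by
  obtain ⟨hv0, hper, hmax⟩ := mem_cycleMaxima.1 hv
  obtain ⟨k, hk⟩ : ∃ k, (cutSpine g)^[k] v ∈ spineRecords g := by
    by_contra! hno
    have hagree : ∀ k, (cutSpine g)^[k] v = g^[k] v := by
      intro k
      induction k with
      | zero => rfl
      | succ k ih =>
        have htop : (cutSpine g)^[k] v ≠ ⊤ := fun h => G.top_notMem_periodicPts_cutSpine
          (h ▸ (Reaches.iterate _ v k).mem_periodicPts hper)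
        rw [iterate_succ_apply', iterate_succ_apply', cutSpine_apply_of_notMem htop (hno k), ih]
    obtain ⟨n, hn, hvn⟩ := Function.mem_periodicPts.1 hper
    exact hv0 (G.eq_bot_of_mem_periodicPts (mk_mem_periodicPts hn ((hagree n).symm.trans hvn)))
  have hu := (mem_cycleMaxima.1 (G.mem_cycleMaxima_cutSpine hk)).2.2
  rwa [(Reaches.iterate _ v k).eq_of_orbit_le hper hmax hu] at hk

lemma cycleMaxima_cutSpine (G : IsTreeSide g) : cycleMaxima (cutSpine g) = spineRecords g :=
  Finset.ext fun _ => ⟨G.mem_spineRecords_of_mem_cycleMaxima, G.mem_cycleMaxima_cutSpine⟩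

lemma isCycleSide_cutSpine (G : IsTreeSide g) : IsCycleSide (cutSpine g) where
  map_bot := G.cutSpine_bot
  map_top := G.cutSpine_top
  map_ne_bot i hi htop h := by
    set S := insert ⊤ (spineRecords g)
    have hρ : S.cycleOn i ≠ ⊥ := fun h' => hi <| by
      rw [← S.cycleOn.symm_apply_apply i, h', cycleOn_symm_apply_of_notMem _ G.bot_notMem]
    have hc := G.child_unique _ _ hρ h (mem_spineRecords.1 G.rootChild_mem).1 G.apply_rootChild
    rw [← G.cycleOn_top] at hc
    exact htop (S.cycleOn.injective hc)
  nonempty := G.cycleMaxima_cutSpine ▸ ⟨_, G.rootChild_mem⟩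

lemma linkCycles_cutSpine (G : IsTreeSide g) : linkCycles (cutSpine g) = g := by
  rw [linkCycles, G.cycleMaxima_cutSpine]
  ext i
  simp [cutSpine]

lemma not_forall_reaches_bot_cutSpine (G : IsTreeSide g) : ¬ ∀ v, Reaches (cutSpine g) v ⊥ :=
  fun h => (mem_spineRecords.1 G.rootChild_mem).1 <|
    ((h _).symm_of_mem_periodicPts (mem_cycleMaxima.1 (G.mem_cycleMaxima_cutSpine
      G.rootChild_mem)).2.1).eq_of_isFixedPt G.cutSpine_bot

end IsTreeSide

end Bijection

section Sums

variable {R : Type*} [CommSemiring R] [Fintype α] [LinearOrder α] [BoundedOrder α]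
  (x : α → R) (y : α → α → R)

variable (α) in
def topChildMaps : Finset (α → α) :=
  Fintype.piFinset fun i => if i = ⊥ ∨ i = ⊤ then {⊥} else univ.erase ⊥

variable (α) in
open scoped Classical in
def singleChildTrees : Finset (α → α) :=
  {p | p ⊥ = ⊥ ∧ (∀ v, Reaches p v ⊥) ∧ #{i | i ≠ ⊥ ∧ p i = ⊥} = 1}

lemma mem_topChildMaps {p : α → α} :
    p ∈ topChildMaps α ↔ p ⊥ = ⊥ ∧ p ⊤ = ⊥ ∧ ∀ i, i ≠ ⊥ → i ≠ ⊤ → p i ≠ ⊥ := by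
  simp only [topChildMaps, Fintype.mem_piFinset]
  constructor
  · intro h
    exact ⟨by simpa using h ⊥, by simpa using h ⊤, fun i hi ht => by simpa [hi, ht] using h i⟩
  · rintro ⟨hbot, htop, hne⟩ i
    by_cases hi : i = ⊥ ∨ i = ⊤
    · rcases hi with rfl | rfl <;> simp [*]
    · push Not at hi
      simp [hi, hne i hi.1 hi.2]

lemma mem_singleChildTrees {p : α → α} : p ∈ singleChildTrees α ↔
    p ⊥ = ⊥ ∧ (∀ v, Reaches p v ⊥) ∧ #{i | i ≠ ⊥ ∧ p i = ⊥} = 1 := by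
  simp [singleChildTrees]

lemma sum_edgeWeight [LocallyFiniteOrderBot α] [LocallyFiniteOrderTop α] (i : α) :
    ∑ j ∈ univ.erase ⊥, edgeWeight x y i j =
      y i i * ∑ j ∈ (Iic i).erase ⊥, x j + x i * ∑ j ∈ Ioi i, y i j := by
  have hsplit : univ.erase ⊥ = (Iic i).erase ⊥ ∪ Ioi i := by
    ext j
    simp only [mem_erase, mem_univ, and_true, mem_union, mem_Iic, mem_Ioi]
    refine ⟨fun hj => (le_or_gt j i).imp (⟨hj, ·⟩) id, ?_⟩
    rintro (⟨hj, -⟩ | hij)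
    exacts [hj, (bot_le.trans_lt hij).ne']
  have hdisj : Disjoint ((Iic i).erase ⊥) (Ioi i) := disjoint_left.2 fun j hj hj' =>
    (mem_Ioi.1 hj').not_ge (mem_Iic.1 (mem_of_mem_erase hj))
  rw [hsplit, sum_union hdisj, mul_sum, mul_sum]
  congr 1
  · exact sum_congr rfl fun j hj =>
      (edgeWeight_of_le (mem_Iic.1 (mem_of_mem_erase hj))).trans (mul_comm _ _)
  · exact sum_congr rfl fun j hj => edgeWeight_of_lt (mem_Ioi.1 hj)

lemma sum_treeWeight_topChildMaps [Nontrivial α] :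
    ∑ p ∈ topChildMaps α, treeWeight x y p =
      x ⊥ * y ⊤ ⊤ * ∏ i ∈ (univ.erase ⊥).erase ⊤, ∑ j ∈ univ.erase ⊥, edgeWeight x y i j := by
  set t : α → Finset α := fun i => if i = ⊥ ∨ i = ⊤ then {⊥} else univ.erase ⊥
  set w : α → α → R := fun i j => if i = ⊥ then 1 else edgeWeight x y i j
  have hw : ∀ p : α → α, ∏ i, w i (p i) = treeWeight x y p := fun p => by
    rw [← mul_prod_erase univ _ (mem_univ ⊥)]
    simp only [w, if_pos rfl, one_mul, treeWeight]
    exact prod_congr rfl fun i hi => if_neg (ne_of_mem_erase hi)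
  have htop : ⊤ ∈ univ.erase (⊥ : α) := mem_erase.2 ⟨top_ne_bot, mem_univ _⟩
  calc ∑ p ∈ topChildMaps α, treeWeight x y p = ∏ i, ∑ j ∈ t i, w i j := by
        rw [prod_univ_sum]
        exact sum_congr rfl fun p _ => (hw p).symm
    _ = (∑ j ∈ t ⊤, w ⊤ j) * ∏ i ∈ (univ.erase ⊥).erase ⊤, ∑ j ∈ t i, w i j := by
        rw [← mul_prod_erase univ _ (mem_univ ⊥), ← mul_prod_erase _ _ htop]
        simp [t, w]
    _ = _ := by
        congr 1
        · simp [t, w, top_ne_bot, edgeWeight_of_le]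
        · refine prod_congr rfl fun i hi => ?_
          obtain ⟨hit, hib⟩ : i ≠ ⊤ ∧ i ≠ ⊥ := by simpa using hi
          simp [t, w, hit, hib]

lemma isTreeSide_of_mem_sdiff [Nontrivial α] {p : α → α}
    (hp : p ∈ singleChildTrees α \ topChildMaps α) : IsTreeSide p := by
  obtain ⟨hp, hnf⟩ := mem_sdiff.1 hp
  obtain ⟨hbot, hreach, hcard⟩ := mem_singleChildTrees.1 hp
  have hunique : ∀ i j, i ≠ ⊥ → p i = ⊥ → j ≠ ⊥ → p j = ⊥ → i = j := fun i j hi hpi hj hpj =>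
    card_le_one.1 hcard.le i (by simp [hi, hpi]) j (by simp [hj, hpj])
  refine ⟨hbot, hreach, hunique, fun htop => hnf (mem_topChildMaps.2 ⟨hbot, htop, ?_⟩)⟩
  exact fun i hi hit hpi => hit (hunique i ⊤ hi hpi top_ne_bot htop)

lemma isCycleSide_of_mem_sdiff [Nontrivial α] {p : α → α}
    (hp : p ∈ topChildMaps α \ singleChildTrees α) : IsCycleSide p := by
  obtain ⟨hp, hnt⟩ := mem_sdiff.1 hp
  obtain ⟨hbot, htop, hne⟩ := mem_topChildMaps.1 hp
  refine ⟨hbot, htop, hne, ?_⟩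
  have hchildren : #{i | i ≠ ⊥ ∧ p i = ⊥} = 1 := card_eq_one.2 ⟨⊤, eq_singleton_iff_unique_mem.2
    ⟨by simp [htop], fun i hi => by_contra fun hit => hne i (mem_filter.1 hi).2.1 hit
      (mem_filter.1 hi).2.2⟩⟩
  obtain ⟨v, hv⟩ : ∃ v, ¬ Reaches p v ⊥ := by
    by_contra! h
    exact hnt (mem_singleChildTrees.2 ⟨hbot, h, hchildren⟩)
  obtain ⟨k, hk⟩ := exists_iterate_mem_periodicPts p v
  obtain ⟨m, hm, -⟩ := exists_mem_cycleMaxima_reaches hbot hk fun h => hv ⟨k, h⟩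
  exact ⟨m, hm⟩

lemma sum_treeWeight_singleChildTrees_eq [Nontrivial α] :
    ∑ p ∈ singleChildTrees α, treeWeight x y p = ∑ p ∈ topChildMaps α, treeWeight x y p := by
  rw [← sum_inter_add_sum_sdiff (singleChildTrees α) (topChildMaps α),
    ← sum_inter_add_sum_sdiff (topChildMaps α) (singleChildTrees α), inter_comm]
  congr 1
  refine sum_nbij' cutSpine linkCycles (fun g hg => ?_) (fun f hf => ?_)
    (fun g hg => (isTreeSide_of_mem_sdiff hg).linkCycles_cutSpine)
    (fun f hf => (isCycleSide_of_mem_sdiff hf).cutSpine_linkCycles) (fun g hg => ?_)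
  · have G := isTreeSide_of_mem_sdiff hg
    have H := G.isCycleSide_cutSpine
    exact mem_sdiff.2 ⟨mem_topChildMaps.2 ⟨H.map_bot, H.map_top, H.map_ne_bot⟩,
      fun h => G.not_forall_reaches_bot_cutSpine (mem_singleChildTrees.1 h).2.1⟩
  · have H := isCycleSide_of_mem_sdiff hf
    exact mem_sdiff.2 ⟨mem_singleChildTrees.2 ⟨H.linkCycles_bot, H.linkCycles_reaches_bot,
      H.card_linkCycles_eq_bot⟩, fun h => H.linkCycles_top_ne_bot (mem_topChildMaps.1 h).2.1⟩
  · have G := isTreeSide_of_mem_sdiff hg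
    have := G.isCycleSide_cutSpine.treeWeight_linkCycles (x := x) (y := y)
    rwa [G.linkCycles_cutSpine] at this

theorem sum_treeWeight_singleChildTrees [Nontrivial α] [LocallyFiniteOrderBot α]
    [LocallyFiniteOrderTop α] :
    ∑ p ∈ singleChildTrees α, treeWeight x y p = x ⊥ * y ⊤ ⊤ *
      ∏ i ∈ (univ.erase ⊥).erase ⊤,
        (y i i * ∑ j ∈ (Iic i).erase ⊥, x j + x i * ∑ j ∈ Ioi i, y i j) := by
  simp only [sum_treeWeight_singleChildTrees_eq, sum_treeWeight_topChildMaps, sum_edgeWeight]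

end Sums

end CayleyTree

end

open scoped Classical in
/-- The paper's vertices `1, …, n + 2` are `0, …, n + 1 : Fin (n + 2)`, so `x 0` is its `x_1`. -/
theorem single_root_edge_gf {R : Type*} [CommRing R] (n : ℕ)
    (x : Fin (n + 2) → R) (y : Fin (n + 2) → Fin (n + 2) → R) :
    ∑ p ∈ (Finset.univ.filter fun p : Fin (n + 2) → Fin (n + 2) =>
        p 0 = 0 ∧ (∀ j, ∃ k : ℕ, p^[k] j = 0) ∧
          (Finset.univ.filter fun i : Fin (n + 2) => i ≠ 0 ∧ p i = 0).card = 1),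
      ∏ i ∈ Finset.univ.erase (0 : Fin (n + 2)),
        (if p i < i then x (p i) * y i i else x i * y i (p i))
    = x 0 * y (Fin.last (n + 1)) (Fin.last (n + 1)) *
        ∏ i ∈ (Finset.univ.erase (0 : Fin (n + 2))).erase (Fin.last (n + 1)),
          (y i i * ∑ j ∈ (Finset.Iic i).erase 0, x j + x i * ∑ j ∈ Finset.Ioi i, y i j) := by
  have key := CayleyTree.sum_treeWeight_singleChildTrees x y
  simp only [CayleyTree.treeWeight, CayleyTree.edgeWeight, bot_eq_zero, Fin.top_eq_last] at key
  convert key using 2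
  ext p
  simp [CayleyTree.mem_singleChildTrees, CayleyTree.Reaches, bot_eq_zero]
end
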